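/- arXiv:math/0605309 — 9 statements merged into one kernel-verified Lean document; each statement's English description precedes it below -/
import Mathlib

section
/- Let k ≥ 2. For a regular subset L ⊆ P, write L_i = {(i,j) ∈ L} ∪ {(m,i) ∈ P : (m,i) ∉ L} (each of cardinality k−1), and let Σ(L) denote the set of k-tuples σ = (σ_1,…,σ_k) where each σ_i : L_i → {0,…,k−2} is a bijection. Each σ ∈ Σ(L) determines a bijection φ_σ : P → {1,…,k} × {0,…,k−2} by φ_σ(i,j) = (i, σ_i(i,j)) if (i,j) ∈ L and φ_σ(i,j) = (j, σ_j(i,j)) if (i,j) ∉ L; let sgn(σ) denote the sign of the permutation obtained from φ_σ by identifying both index sets with {1,…,k(k−1)} via their lexicographic orders. Then det Ξ(λ,μ) = Σ_{L ⊆ P regular} Σ_{σ ∈ Σ(L)} sgn(σ) · ∏_{(i,j)∈L} λ_{ij}·a_{ij}^{σ_i(i,j)} · ∏_{(i,j)∉L} μ_{ij}·a_{ij}^{σ_j(i,j)}. -/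
/-!
Expand `det Ξ` over permutations `π` of the index set. A term vanishes unless `π` sends
every row `(i, j)` into block `i` or block `j`; such a `π` determines the set `L` of pairs sent
to their first block. Since `π` is a bijection, exactly `k - 1` rows land in each block `m`,
and these are precisely the rows of `L_m`, so `L` is regular. Grouping the surviving
permutations by `L` gives the double sum, the permutations with a given `L` being the tuples
in `Σ(L)`.
-/

namespace ReducibleSpectral

noncomputable section

/-- The row index `(i, t)` (with `t : Fin (k-1)`) corresponds to the pair `(i, j) ∈ P`
(where `P = {(i,j) : i ≠ j}`), with `j` the `t`-th element of `{0,…,k-1} \ {i}`;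
this identification is order-preserving for the lexicographic orders. -/
def colToRow (k : ℕ) (i : Fin k) (t : Fin (k - 1)) : Fin k :=
  if (t : ℕ) < (i : ℕ) then ⟨t, by have := t.isLt; omega⟩
  else ⟨(t : ℕ) + 1, by have := t.isLt; have := i.isLt; omega⟩

/-- The matrix `Ξ(λ,μ)`: rows indexed by `P = {(i,j) : i ≠ j}` (in lexicographic order,
encoded via `colToRow`), columns indexed by pairs `(m,n)`, `m ∈ {1,…,k}`, `n ∈ {0,…,k-2}`
(lexicographic); the entry at row `(i,j)`, column `(m,n)` is `λ_{ij}·a_{ij}^n` if `m = i`,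
`μ_{ij}·a_{ij}^n` if `m = j`, and `0` otherwise. -/
def Xi (k : ℕ) (a lam mu : Fin k → Fin k → ℂ) :
    Matrix (Fin k × Fin (k - 1)) (Fin k × Fin (k - 1)) ℂ :=
  fun p q =>
    if q.1 = p.1 then lam p.1 (colToRow k p.1 p.2) * a p.1 (colToRow k p.1 p.2) ^ (q.2 : ℕ)
    else if q.1 = colToRow k p.1 p.2 then
      mu p.1 (colToRow k p.1 p.2) * a p.1 (colToRow k p.1 p.2) ^ (q.2 : ℕ)
    else 0

/-- The extended theta function `ϑ(λ,μ) = det Ξ(λ,μ)`. -/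
def theta (k : ℕ) (a lam mu : Fin k → Fin k → ℂ) : ℂ := (Xi k a lam mu).det

/-- The index set `P = {(i,j) : i,j ∈ {1,…,k}, i ≠ j}` as a finset. -/
def Pfin (k : ℕ) : Finset (Fin k × Fin k) :=
  Finset.univ.filter fun p => p.1 ≠ p.2

/-- For `L ⊆ P`, the set `L_i = {(i,j) ∈ L} ∪ {(m,i) ∈ P : (m,i) ∉ L}`. -/
def Lset (k : ℕ) (L : Finset (Fin k × Fin k)) (i : Fin k) : Finset (Fin k × Fin k) :=
  (L.filter fun p => p.1 = i) ∪ ((Pfin k \ L).filter fun p => p.2 = i)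

/-- `L ⊆ P` is regular iff every `L_i` has cardinality `k - 1`. -/
def IsRegular (k : ℕ) (L : Finset (Fin k × Fin k)) : Prop :=
  ∀ i : Fin k, (Lset k L i).card = k - 1

open Finset Equiv

section Expansion

variable {k : ℕ}

lemma colToRow_ne (i : Fin k) (t : Fin (k - 1)) : colToRow k i t ≠ i := by
  unfold colToRow
  split_ifs <;> (intro h; rw [Fin.ext_iff] at h; simp at h; omega)

lemma colToRow_injective (i : Fin k) : Function.Injective (colToRow k i) := by
  intro s t h
  unfold colToRow at h
  split_ifs at h <;> (rw [Fin.ext_iff] at h ⊢; simp at h ⊢; omega)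

lemma exists_colToRow_eq {i j : Fin k} (h : j ≠ i) : ∃ t, colToRow k i t = j := by
  have hji : (j : ℕ) ≠ i := Fin.val_ne_of_ne h
  by_cases hlt : (j : ℕ) < i
  · exact ⟨⟨j, by omega⟩, by simp [colToRow, hlt]⟩
  · refine ⟨⟨j - 1, by omega⟩, ?_⟩
    simp only [colToRow, if_neg (show ¬ (j : ℕ) - 1 < i by omega)]
    ext; simp; omega

def rowPair (k : ℕ) (x : Fin k × Fin (k - 1)) : Fin k × Fin k :=
  (x.1, colToRow k x.1 x.2)

lemma rowPair_injective : Function.Injective (rowPair k) := by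
  rintro ⟨i, s⟩ ⟨j, t⟩ h
  obtain ⟨rfl, hst⟩ := Prod.mk.inj h
  exact congrArg _ (colToRow_injective i hst)

lemma rowPair_mem_Pfin (x : Fin k × Fin (k - 1)) : rowPair k x ∈ Pfin k := by
  simpa [Pfin, rowPair] using (colToRow_ne x.1 x.2).symm

lemma exists_rowPair_eq {q : Fin k × Fin k} (hq : q ∈ Pfin k) : ∃ x, rowPair k x = q := by
  simp only [Pfin, mem_filter, mem_univ, true_and] at hq
  obtain ⟨t, ht⟩ := exists_colToRow_eq (Ne.symm hq)
  exact ⟨(q.1, t), by rw [rowPair, ht]⟩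

lemma card_filter_fst_eq (i : Fin k) : #{y : Fin k × Fin (k - 1) | y.1 = i} = k - 1 := by
  have : ({y : Fin k × Fin (k - 1) | y.1 = i} : Finset _) = {i} ×ˢ univ := by
    ext ⟨j, t⟩; simp [eq_comm]
  simp [this]

/-- Every row `(i, j)` is sent to block `i` or block `j`, the only columns where it can be
nonzero. -/
def IsAdmissible (π : Perm (Fin k × Fin (k - 1))) : Prop :=
  ∀ x, (π x).1 = x.1 ∨ (π x).1 = colToRow k x.1 x.2

/-- The set `L` of the paper attached to an admissible `π`. -/
def lambdaPairs (π : Perm (Fin k × Fin (k - 1))) : Finset (Fin k × Fin k) :=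
  ({x | (π x).1 = x.1} : Finset _).image (rowPair k)

variable {π : Perm (Fin k × Fin (k - 1))}

lemma rowPair_mem_lambdaPairs_iff (x : Fin k × Fin (k - 1)) :
    rowPair k x ∈ lambdaPairs π ↔ (π x).1 = x.1 := by
  simp [lambdaPairs, rowPair_injective.eq_iff]

lemma lambdaPairs_subset_Pfin : lambdaPairs π ⊆ Pfin k := by
  simp only [lambdaPairs, image_subset_iff]
  exact fun x _ => rowPair_mem_Pfin x

lemma Lset_lambdaPairs (hπ : IsAdmissible π) (i : Fin k) :
    Lset k (lambdaPairs π) i = ({x | (π x).1 = i} : Finset _).image (rowPair k) := by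
  ext q
  simp only [Lset, mem_union, mem_filter, mem_sdiff, mem_image, mem_univ, true_and]
  constructor
  · rintro (⟨hq, rfl⟩ | ⟨⟨hqP, hq⟩, rfl⟩)
    · obtain ⟨x, rfl⟩ := exists_rowPair_eq (lambdaPairs_subset_Pfin hq)
      exact ⟨x, (rowPair_mem_lambdaPairs_iff x).1 hq, rfl⟩
    · obtain ⟨x, rfl⟩ := exists_rowPair_eq hqP
      rw [rowPair_mem_lambdaPairs_iff] at hq
      exact ⟨x, (hπ x).resolve_left hq, rfl⟩
  · rintro ⟨x, rfl, rfl⟩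
    by_cases hx : (π x).1 = x.1
    · exact Or.inl ⟨(rowPair_mem_lambdaPairs_iff x).2 hx, hx.symm⟩
    · refine Or.inr ⟨⟨rowPair_mem_Pfin x, mt (rowPair_mem_lambdaPairs_iff x).1 hx⟩, ?_⟩
      exact ((hπ x).resolve_left hx).symm

lemma isRegular_lambdaPairs (hπ : IsAdmissible π) : IsRegular k (lambdaPairs π) := by
  intro i
  rw [Lset_lambdaPairs hπ, card_image_of_injective _ rowPair_injective]
  calc #{x | (π x).1 = i} = #{y : Fin k × Fin (k - 1) | y.1 = i} :=
        card_equiv π (by simp)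
    _ = k - 1 := card_filter_fst_eq i

lemma forall_fst_eq_ite_iff {L : Finset (Fin k × Fin k)} (hL : L ⊆ Pfin k) :
    (∀ x, (π x).1 = if rowPair k x ∈ L then x.1 else colToRow k x.1 x.2) ↔
      IsAdmissible π ∧ lambdaPairs π = L := by
  constructor
  · intro h
    have hmem : ∀ x, rowPair k x ∈ L ↔ (π x).1 = x.1 := fun x => by
      have hx := h x
      split_ifs at hx with hxL
      · exact iff_of_true hxL hx
      · exact iff_of_false hxL (by rw [hx]; exact colToRow_ne x.1 x.2)
    refine ⟨fun x => ?_, ?_⟩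
    · have hx := h x
      split_ifs at hx <;> simp [hx]
    · ext q
      by_cases hq : q ∈ Pfin k
      · obtain ⟨x, rfl⟩ := exists_rowPair_eq hq
        rw [rowPair_mem_lambdaPairs_iff, hmem]
      · exact iff_of_false (fun h => hq (lambdaPairs_subset_Pfin h)) (fun h => hq (hL h))
  · rintro ⟨hπ, rfl⟩ x
    by_cases hx : (π x).1 = x.1
    · rwa [if_pos ((rowPair_mem_lambdaPairs_iff x).2 hx)]
    · rw [if_neg (mt (rowPair_mem_lambdaPairs_iff x).1 hx)]
      exact (hπ x).resolve_left hx

variable (a lam mu : Fin k → Fin k → ℂ)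

lemma prod_Xi_eq_zero (hπ : ¬ IsAdmissible π) : ∏ x, Xi k a lam mu x (π x) = 0 := by
  obtain ⟨x, hx⟩ := not_forall.1 hπ
  rw [not_or] at hx
  exact prod_eq_zero (mem_univ x) (by rw [Xi, if_neg hx.1, if_neg hx.2])

lemma prod_Xi_eq {L : Finset (Fin k × Fin k)}
    (hπ : ∀ x, (π x).1 = if rowPair k x ∈ L then x.1 else colToRow k x.1 x.2) :
    ∏ x, Xi k a lam mu x (π x) =
      ∏ x, (if rowPair k x ∈ L then lam x.1 (colToRow k x.1 x.2)
        else mu x.1 (colToRow k x.1 x.2)) * a x.1 (colToRow k x.1 x.2) ^ ((π x).2 : ℕ) := by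
  refine prod_congr rfl fun x _ => ?_
  have hx := hπ x
  split_ifs at hx ⊢ with hL
  · rw [Xi, if_pos hx]
  · rw [Xi, if_neg (hx ▸ colToRow_ne x.1 x.2), if_pos hx]

lemma theta_eq_sum_admissible [DecidablePred (IsAdmissible (k := k))] :
    theta k a lam mu = ∑ π ∈ (univ : Finset (Perm _)).filter IsAdmissible,
      ((Perm.sign π : ℤ) : ℂ) * ∏ x, Xi k a lam mu x (π x) := by
  rw [theta, ← Matrix.det_transpose, Matrix.det_apply', sum_filter_of_ne]
  · rfl
  · intro π _ hne
    by_contra hπ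
    exact hne (by rw [prod_Xi_eq_zero a lam mu hπ, mul_zero])

end Expansion

/-- A tuple `σ ∈ Σ(L)` is encoded by the permutation `π = φ_σ` of the row/column index set,
read through `rowPair`: `(π x).1` is the block `i` or `j` chosen by `L`, and `(π x).2` the
exponent `σ_i(i,j)` or `σ_j(i,j)`. -/
theorem theta_eq_sum_over_regular_and_bijections_general (k : ℕ)
    (a lam mu : Fin k → Fin k → ℂ) :
    theta k a lam mu =
      ∑ L ∈ (Pfin k).powerset.filter (fun L => ∀ i : Fin k, (Lset k L i).card = k - 1),
        ∑ π ∈ (Finset.univ : Finset (Equiv.Perm (Fin k × Fin (k - 1)))).filter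
            (fun π => ∀ x : Fin k × Fin (k - 1),
              (π x).1 = if (x.1, colToRow k x.1 x.2) ∈ L then x.1 else colToRow k x.1 x.2),
          ((Equiv.Perm.sign π : ℤ) : ℂ) *
            ∏ x : Fin k × Fin (k - 1),
              (if (x.1, colToRow k x.1 x.2) ∈ L then lam x.1 (colToRow k x.1 x.2)
                else mu x.1 (colToRow k x.1 x.2)) *
                a x.1 (colToRow k x.1 x.2) ^ (((π x).2 : ℕ)) := by
  classical
  rw [theta_eq_sum_admissible, ← sum_fiberwise_of_maps_to (g := lambdaPairs)
    (t := (Pfin k).powerset.filter (fun L => ∀ i : Fin k, (Lset k L i).card = k - 1))]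
  · refine sum_congr rfl fun L hL => ?_
    have hLP : L ⊆ Pfin k := mem_powerset.1 (mem_filter.1 hL).1
    rw [filter_filter]
    refine sum_congr ?_ fun π hπ => ?_
    · ext π
      simp only [mem_filter, mem_univ, true_and]
      exact (forall_fst_eq_ite_iff hLP).symm
    · rw [prod_Xi_eq a lam mu (mem_filter.1 hπ).2]
      rfl
  · intro π hπ
    exact mem_filter.2 ⟨mem_powerset.2 lambdaPairs_subset_Pfin,
      isRegular_lambdaPairs (mem_filter.1 hπ).2⟩

/-- the full permutation expansion of `det Ξ`.

For a regular `L ⊆ P`, the tuples `σ ∈ Σ(L)` of bijections `σ_i : L_i ≃ {0,…,k-2}`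
correspond exactly (with matching signs, under the lexicographic identifications)
to the permutations `π` of `{1,…,k} × {0,…,k-2}` such that, for each `x` encoding the
pair `p = (i,j) ∈ P`, the first coordinate of `π x` is `i` if `p ∈ L` and `j` if `p ∉ L`;
the exponent `σ_i(i,j)` (resp. `σ_j(i,j)`) is the second coordinate of `π x`. -/
theorem theta_eq_sum_over_regular_and_bijections (k : ℕ) (hk : 2 ≤ k)
    (a lam mu : Fin k → Fin k → ℂ) :
    theta k a lam mu =
      ∑ L ∈ (Pfin k).powerset.filter (fun L => ∀ i : Fin k, (Lset k L i).card = k - 1),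
        ∑ π ∈ (Finset.univ : Finset (Equiv.Perm (Fin k × Fin (k - 1)))).filter
            (fun π => ∀ x : Fin k × Fin (k - 1),
              (π x).1 = if (x.1, colToRow k x.1 x.2) ∈ L then x.1 else colToRow k x.1 x.2),
          ((Equiv.Perm.sign π : ℤ) : ℂ) *
            ∏ x : Fin k × Fin (k - 1),
              (if (x.1, colToRow k x.1 x.2) ∈ L then lam x.1 (colToRow k x.1 x.2)
                else mu x.1 (colToRow k x.1 x.2)) *
                a x.1 (colToRow k x.1 x.2) ^ (((π x).2 : ℕ)) :=
  theta_eq_sum_over_regular_and_bijections_general k a lam mu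

end

end ReducibleSpectral
end

section
/- Let k ≥ 2 and let p, q be integers. Then for every tuple (λ_{ij}) ∈ (ℂ*)^P and every (z_1,…,z_k) ∈ (ℂ*)^k one has ϑ( ((z_i·z_j^{−1}·λ_{ij})^p)_{(i,j)∈P}, ((z_i·z_j^{−1}·λ_{ij})^q)_{(i,j)∈P} ) = ϑ( (λ_{ij}^p)_{(i,j)∈P}, (λ_{ij}^q)_{(i,j)∈P} ). In other words, the function (λ_{ij}) ↦ ϑ(λ^p, λ^q) is invariant under the action (z_1,…,z_k)·(λ_{ij}) = (z_i z_j^{−1} λ_{ij}). -/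
/-!
Write `(z_i z_j⁻¹ λ_ij)^p = s_ij · z_i^(p-q) · λ_ij^p` and `(z_i z_j⁻¹ λ_ij)^q = s_ij · z_j^(p-q) · λ_ij^q`
with `s_ij = z_i^q z_j^(-p)`. Then the twisted `Ξ` is `Ξ` with row `(i,j)` scaled by `s_ij` and
column `(m,n)` scaled by `z_m^(p-q)`, so its determinant changes by
`∏_{i≠j} s_ij · ∏_m z_m^((p-q)(k-1)) = ∏_m (z_m^q z_m^(-p) z_m^(p-q))^(k-1) = 1`,
because every `m` occurs `k - 1` times as first and `k - 1` times as second index of a pair in `P`.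
-/

namespace ReducibleSpectral

noncomputable section

theorem prod_prod_succAbove {M : Type*} [CommMonoid M] {n : ℕ} (g : Fin (n + 1) → M) :
    ∏ i : Fin (n + 1), ∏ t : Fin n, g (i.succAbove t) = ∏ j, g j ^ n := by
  have hoff : ∀ i, ∏ t : Fin n, g (i.succAbove t) = ∏ j, if j = i then 1 else g j := by
    intro i
    rw [Fin.prod_univ_succAbove _ i]
    simp [Fin.succAbove_ne]
  calc ∏ i : Fin (n + 1), ∏ t : Fin n, g (i.succAbove t)
      = ∏ j, ∏ i, if j = i then 1 else g j := by
        simp only [hoff]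
        exact Finset.prod_comm
    _ = ∏ j, g j ^ n := by
        refine Finset.prod_congr rfl fun j _ => ?_
        rw [Fin.prod_univ_succAbove _ j]
        simp [(Fin.succAbove_ne j _).symm]

lemma colToRow_succ (n : ℕ) (i : Fin (n + 1)) (t : Fin n) :
    colToRow (n + 1) i t = i.succAbove t := by
  unfold colToRow Fin.succAbove
  split_ifs <;> simp [Fin.ext_iff, Fin.lt_def] at * <;> omega

lemma prod_prod_colToRow {M : Type*} [CommMonoid M] (k : ℕ) (g : Fin k → M) :
    ∏ i, ∏ t : Fin (k - 1), g (colToRow k i t) = ∏ j, g j ^ (k - 1) := by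
  cases k with
  | zero => simp
  | succ n =>
    simp only [colToRow_succ]
    exact prod_prod_succAbove g

lemma Xi_scale (k : ℕ) (a lam mu s : Fin k → Fin k → ℂ) (w : Fin k → ℂ) :
    Xi k a (fun i j => s i j * w i * lam i j) (fun i j => s i j * w j * mu i j) =
      Matrix.diagonal (fun P => s P.1 (colToRow k P.1 P.2)) * Xi k a lam mu *
        Matrix.diagonal (fun Q => w Q.1) := by
  ext P Q
  simp only [Xi, Matrix.diagonal_mul, Matrix.mul_diagonal]
  split_ifs with h₁ h₂
  · rw [h₁]; ring
  · rw [h₂]; ring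
  · ring

lemma theta_scale (k : ℕ) (a lam mu : Fin k → Fin k → ℂ) (f g w : Fin k → ℂ) :
    theta k a (fun i j => f i * g j * w i * lam i j) (fun i j => f i * g j * w j * mu i j) =
      (∏ m, f m * g m * w m) ^ (k - 1) * theta k a lam mu := by
  rw [theta, theta, Xi_scale k a lam mu (fun i j => f i * g j), Matrix.det_mul, Matrix.det_mul,
    Matrix.det_diagonal, Matrix.det_diagonal, Fintype.prod_prod_type, Fintype.prod_prod_type]
  simp only [Finset.prod_mul_distrib, prod_prod_colToRow, Fin.prod_const, Finset.prod_pow]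
  ring

theorem theta_pq_invariant_general (k : ℕ) (a : Fin k → Fin k → ℂ) (p q : ℤ)
    (lam : Fin k → Fin k → ℂ)
    (z : Fin k → ℂ) (hz : ∀ i, z i ≠ 0) :
    theta k a (fun i j => (z i * (z j)⁻¹ * lam i j) ^ p)
        (fun i j => (z i * (z j)⁻¹ * lam i j) ^ q) =
      theta k a (fun i j => lam i j ^ p) (fun i j => lam i j ^ q) := by
  have hp : ∀ i j, (z i * (z j)⁻¹ * lam i j) ^ p =
      z i ^ q * (z j ^ p)⁻¹ * z i ^ (p - q) * lam i j ^ p := fun i j => by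
    rw [mul_zpow, mul_zpow, inv_zpow, zpow_sub₀ (hz i)]
    field_simp [zpow_ne_zero _ (hz i)]
  have hq : ∀ i j, (z i * (z j)⁻¹ * lam i j) ^ q =
      z i ^ q * (z j ^ p)⁻¹ * z j ^ (p - q) * lam i j ^ q := fun i j => by
    rw [mul_zpow, mul_zpow, inv_zpow, zpow_sub₀ (hz j)]
    field_simp [zpow_ne_zero _ (hz j)]
  have hone : ∀ m, z m ^ q * (z m ^ p)⁻¹ * z m ^ (p - q) = 1 := fun m => by
    rw [zpow_sub₀ (hz m)]
    field_simp [zpow_ne_zero _ (hz m)]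
  simp only [hp, hq, theta_scale, hone, Finset.prod_const_one, one_pow, one_mul]

/-- for integers `p, q`, the function `(λ_{ij}) ↦ ϑ(λ^p, λ^q)` on `(ℂ*)^P`
is invariant under the action `(z_1,…,z_k)·(λ_{ij}) = (z_i z_j^{−1} λ_{ij})` of `(ℂ*)^k`. -/
theorem theta_pq_invariant (k : ℕ) (hk : 2 ≤ k) (a : Fin k → Fin k → ℂ) (p q : ℤ)
    (lam : Fin k → Fin k → ℂ) (hlam : ∀ i j : Fin k, i ≠ j → lam i j ≠ 0)
    (z : Fin k → ℂ) (hz : ∀ i, z i ≠ 0) :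
    theta k a (fun i j => (z i * (z j)⁻¹ * lam i j) ^ p)
        (fun i j => (z i * (z j)⁻¹ * lam i j) ^ q) =
      theta k a (fun i j => lam i j ^ p) (fun i j => lam i j ^ q) :=
  theta_pq_invariant_general k a p q lam z hz

end

end ReducibleSpectral
end

section
/- Let k ≥ 2 and fix complex numbers λ_{ij}, μ_{ij} ((i,j) ∈ P). Define Λ : ℂ^k → ℂ by Λ(u_1,…,u_k) = ϑ( (λ_{ij}·(a_{ij} − u_i))_{(i,j)∈P}, (μ_{ij}·(a_{ij} − u_j))_{(i,j)∈P} ). Then for each l ∈ {1,…,k}, with the other variables held fixed, the function u_l ↦ Λ(u_1,…,u_k) is a polynomial function of u_l of degree at most k−1. -/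
/-!
Scaling `λ_{ij}` by `a_{ij} - u_i` and `μ_{ij}` by `a_{ij} - u_j` multiplies every nonzero entry
of column `(m, n)` of `Ξ(λ, μ)` by `a_{ij} - u_m`. So `Λ(u)` is the determinant of a Hadamard
product in which only the `k - 1` columns with `m = l` depend on `u_l`, each affinely; every term
of the Leibniz expansion takes one entry per column, hence has degree at most `k - 1` in `u_l`.
-/

namespace ReducibleSpectral

noncomputable section

/-- The function `Λ(u_1,…,u_k) = ϑ((λ_{ij}·(a_{ij} − u_i)), (μ_{ij}·(a_{ij} − u_j)))`. -/
def LambdaFun (k : ℕ) (a lam mu : Fin k → Fin k → ℂ) (u : Fin k → ℂ) : ℂ :=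
  theta k a (fun i j => lam i j * (a i j - u i)) (fun i j => mu i j * (a i j - u j))

open Polynomial Matrix

theorem _root_.Matrix.natDegree_det_le_of_natDegree_le {R n : Type*} [CommRing R] [Fintype n]
    [DecidableEq n] (M : Matrix n n R[X]) (d : n → ℕ) (h : ∀ i j, (M i j).natDegree ≤ d j) :
    M.det.natDegree ≤ ∑ j, d j := by
  rw [det_apply]
  refine natDegree_sum_le_of_forall_le _ _ fun σ _ => ?_
  refine (natDegree_smul_le _ _).trans ?_
  exact (natDegree_prod_le _ _).trans (Finset.sum_le_sum fun j _ => h _ _)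

theorem Xi_mul_sub_eq_hadamard (k : ℕ) (a lam mu : Fin k → Fin k → ℂ) (u : Fin k → ℂ) :
    Xi k a (fun i j => lam i j * (a i j - u i)) (fun i j => mu i j * (a i j - u j)) =
      Xi k a lam mu ⊙ of fun p q => a p.1 (colToRow k p.1 p.2) - u q.1 := by
  ext p q
  simp only [Xi, hadamard_apply, of_apply]
  split_ifs with h₁ h₂
  · rw [h₁]; ring
  · rw [h₂]; ring
  · rw [zero_mul]

theorem LambdaFun_polynomial_in_each_variable_general (k : ℕ)
    (a lam mu : Fin k → Fin k → ℂ) (l : Fin k) (u : Fin k → ℂ) :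
    ∃ Q : Polynomial ℂ, Q.degree ≤ (k - 1 : ℕ) ∧
      ∀ w : ℂ, LambdaFun k a lam mu (Function.update u l w) = Q.eval w := by
  set uX : Fin k → ℂ[X] := Function.update (fun i => C (u i)) l X
  set M : Matrix (Fin k × Fin (k - 1)) (Fin k × Fin (k - 1)) ℂ[X] :=
    (Xi k a lam mu).map C ⊙ of fun p q => C (a p.1 (colToRow k p.1 p.2)) - uX q.1
  have hdeg : ∀ p q, (M p q).natDegree ≤ if q.1 = l then 1 else 0 := by
    intro p q
    simp only [M, hadamard_apply, map_apply, of_apply]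
    refine (natDegree_C_mul_le _ _).trans ?_
    by_cases h : q.1 = l
    · simpa [uX, h] using (natDegree_sub_le _ _).trans (by simp)
    · simp [uX, h]
  refine ⟨M.det, degree_le_of_natDegree_le ?_, fun w => ?_⟩
  · refine (M.natDegree_det_le_of_natDegree_le _ hdeg).trans_eq ?_
    rw [Fintype.sum_prod_type]
    simp [apply_ite Finset.card]
  · have heval : M.map (evalRingHom w) = Xi k a lam mu ⊙
        of fun p q => a p.1 (colToRow k p.1 p.2) - Function.update u l w q.1 := by
      ext p q
      simp only [M, uX, map_apply, hadamard_apply, of_apply, Function.update_apply]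
      split_ifs <;> simp
    rw [LambdaFun, theta, Xi_mul_sub_eq_hadamard, ← heval]
    exact ((evalRingHom w).map_det M).symm

/-- in each variable `u_l` separately (the other variables held fixed),
`Λ` is a polynomial function of degree at most `k − 1`. -/
theorem LambdaFun_polynomial_in_each_variable (k : ℕ) (hk : 2 ≤ k)
    (a lam mu : Fin k → Fin k → ℂ) (l : Fin k) (u : Fin k → ℂ) :
    ∃ Q : Polynomial ℂ, Q.degree ≤ (k - 1 : ℕ) ∧
      ∀ w : ℂ, LambdaFun k a lam mu (Function.update u l w) = Q.eval w :=
  LambdaFun_polynomial_in_each_variable_general k a lam mu l u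

end

end ReducibleSpectral
end

section
/- Let x_i, x_j ∈ ℝ and z_i, z_j ∈ ℂ with z_i ≠ z_j. Set r_{ij} = sqrt((x_i−x_j)² + |z_i−z_j|²), a_{ij} = ((x_i−x_j) + r_{ij})/(conj(z_i) − conj(z_j)) and a_{ji} = ((x_j−x_i) + r_{ij})/(conj(z_j) − conj(z_i)), and let η_i(ζ) = z_i + 2x_iζ − conj(z_i)ζ², η_j(ζ) = z_j + 2x_jζ − conj(z_j)ζ². Then: (1) η_i(ζ) − η_j(ζ) = (conj(z_j) − conj(z_i))·(ζ − a_{ij})·(ζ − a_{ji}) for all ζ ∈ ℂ; (2) a_{ji} = −1/conj(a_{ij}); (3) a_{ij} ≠ a_{ji}. In other words, the two conics η = η_i(ζ) and η = η_j(ζ) intersect in a pair of distinct points lying over the antipodal pair of points a_{ij}, −1/conj(a_{ij}) of the Riemann sphere. -/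
namespace ReducibleSpectral

noncomputable section

/-- The component of the spectral curve attached to `(x, z) ∈ ℝ × ℂ`:
the graph of `η(ζ) = z + 2xζ − conj(z)·ζ²`. -/
def eta (x : ℝ) (z : ℂ) (ζ : ℂ) : ℂ :=
  z + 2 * (x : ℂ) * ζ - (starRingEnd ℂ) z * ζ ^ 2

/-- `r_{ij} = sqrt((x_i−x_j)² + |z_i−z_j|²)`. -/
def rr (x x' : ℝ) (z z' : ℂ) : ℝ :=
  Real.sqrt ((x - x') ^ 2 + ‖z - z'‖ ^ 2)

/-- `a_{ij} = ((x_i−x_j) + r_{ij}) / (conj(z_i) − conj(z_j))`, the image in `ℙ¹` of one of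
the two intersection points of the components attached to `(x_i,z_i)` and `(x_j,z_j)`. -/
def aa (x x' : ℝ) (z z' : ℂ) : ℂ :=
  (((x - x' : ℝ) : ℂ) + ((rr x x' z z' : ℝ) : ℂ)) / ((starRingEnd ℂ) z - (starRingEnd ℂ) z')

/-- for `z_i ≠ z_j`, the two components intersect in a pair of distinct points
lying over the antipodal pair `a_{ij}`, `a_{ji} = −1/conj(a_{ij})`:
`η_i − η_j = (conj(z_j) − conj(z_i))·(ζ − a_{ij})·(ζ − a_{ji})`, `a_{ji} = −1/conj(a_{ij})`,
and `a_{ij} ≠ a_{ji}`. -/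
theorem components_intersect_in_antipodal_pair (xi xj : ℝ) (zi zj : ℂ) (hz : zi ≠ zj) :
    (∀ ζ : ℂ, eta xi zi ζ - eta xj zj ζ =
        ((starRingEnd ℂ) zj - (starRingEnd ℂ) zi) *
          (ζ - aa xi xj zi zj) * (ζ - aa xj xi zj zi)) ∧
      aa xj xi zj zi = -1 / (starRingEnd ℂ) (aa xi xj zi zj) ∧
      aa xi xj zi zj ≠ aa xj xi zj zi := by
  have hzz : zi - zj ≠ 0 := sub_ne_zero.mpr hz
  have hw : (starRingEnd ℂ) zi - (starRingEnd ℂ) zj ≠ 0 :=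
    sub_ne_zero.mpr (fun hh => hz ((starRingEnd ℂ).injective hh))
  set d : ℝ := xi - xj with hd
  set r : ℝ := rr xi xj zi zj with hr
  have habs : 0 < ‖zi - zj‖ := norm_pos_iff.mpr hzz
  have hrsq : r ^ 2 = d ^ 2 + ‖zi - zj‖ ^ 2 := by
    rw [hr, rr, Real.sq_sqrt, ← hd]
    positivity
  have hrgt : |d| < r := by
    rw [hr, rr, ← hd, ← Real.sqrt_sq_eq_abs]
    exact Real.sqrt_lt_sqrt (by positivity) (by nlinarith)
  have hrpos : 0 < r := lt_of_le_of_lt (abs_nonneg d) hrgt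
  have hdr : 0 < d + r := by
    have := neg_abs_le d
    linarith
  have hrsymm : rr xj xi zj zi = r := by
    rw [hr, rr, rr]
    have h1 : (xj - xi) ^ 2 = (xi - xj) ^ 2 := by ring
    rw [h1, norm_sub_rev zj zi]
  have hC : ((r : ℂ)) ^ 2 = (d : ℂ) ^ 2 +
      (zi - zj) * ((starRingEnd ℂ) zi - (starRingEnd ℂ) zj) := by
    rw [← map_sub, Complex.mul_conj, ← Complex.sq_norm]
    exact_mod_cast congrArg Complex.ofReal hrsq
  have haij : aa xi xj zi zj = ((d : ℂ) + (r : ℂ)) / ((starRingEnd ℂ) zi - (starRingEnd ℂ) zj) := by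
    rw [aa, ← hr, ← hd]
  have haji : aa xj xi zj zi = (-(d : ℂ) + (r : ℂ)) /
      ((starRingEnd ℂ) zj - (starRingEnd ℂ) zi) := by
    rw [aa, hrsymm]
    push_cast [hd]
    ring_nf
  have hw' : (starRingEnd ℂ) zj - (starRingEnd ℂ) zi ≠ 0 := by
    intro h
    apply hw
    linear_combination -h
  have hA : aa xi xj zi zj * ((starRingEnd ℂ) zi - (starRingEnd ℂ) zj) = (d : ℂ) + r := by
    rw [haij, div_mul_cancel₀ _ hw]
  have hA2 : aa xj xi zj zi * ((starRingEnd ℂ) zi - (starRingEnd ℂ) zj) = (d : ℂ) - r := by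
    rw [haji]
    field_simp
    ring
  have hdC : (d : ℂ) = (xi : ℂ) - xj := by
    push_cast [hd]; ring
  have hdrC : (d : ℂ) + (r : ℂ) ≠ 0 := by
    rw [← Complex.ofReal_add]
    exact_mod_cast ne_of_gt hdr
  refine ⟨?_, ?_, ?_⟩
  · intro ζ
    apply mul_left_cancel₀ hw
    rw [eta, eta]
    linear_combination
      (aa xj xi zj zi * ((starRingEnd ℂ) zi - (starRingEnd ℂ) zj)
        - ζ * ((starRingEnd ℂ) zi - (starRingEnd ℂ) zj)) * hA +
      (((d : ℂ) + r) - ζ * ((starRingEnd ℂ) zi - (starRingEnd ℂ) zj)) * hA2 - hC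
      - 2 * ζ * ((starRingEnd ℂ) zi - (starRingEnd ℂ) zj) * hdC
  · have hconj : (starRingEnd ℂ) (aa xi xj zi zj) = ((d : ℂ) + r) / (zi - zj) := by
      rw [haij, map_div₀, map_add, Complex.conj_ofReal, Complex.conj_ofReal, map_sub,
        Complex.conj_conj, Complex.conj_conj]
    rw [haji, hconj]
    rw [div_eq_div_iff hw' (div_ne_zero hdrC hzz), ← mul_div_assoc,
      div_eq_iff hzz]
    linear_combination hC
  · rw [haij, haji]
    intro h
    rw [div_eq_div_iff hw hw'] at h
    have h2 : (2 * (r : ℂ)) * ((starRingEnd ℂ) zi - (starRingEnd ℂ) zj) = 0 := by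
      linear_combination -h
    rcases mul_eq_zero.mp h2 with h1 | h1
    · have hr0 : r = 0 := by
        have : (r : ℂ) = 0 := by
          have h2 : (2 : ℂ) ≠ 0 := two_ne_zero
          rcases mul_eq_zero.mp h1 with h3 | h3
          · exact absurd h3 h2
          · exact h3
        exact_mod_cast this
      exact absurd hr0 (ne_of_gt hrpos)
    · exact hw h1

end

end ReducibleSpectral
end

section
/- Let k ≥ 1 and let A_0, A_1, A_2 ∈ M_k(ℂ) be matrices such that every matrix commuting with each of A_0, A_1 and A_2 is a scalar multiple of the identity. Suppose h ∈ GL(k,ℂ) satisfies h A_0 h^{−1} = −A_2^*, h A_1 h^{−1} = A_1^*, and h A_2 h^{−1} = −A_0^*, where ^* denotes conjugate transpose. Then there exists ω ∈ ℂ with |ω| = 1 such that ωh is Hermitian; in particular there exists a Hermitian invertible matrix h' satisfying h' A_0 (h')^{−1} = −A_2^*, h' A_1 (h')^{−1} = A_1^*, and h' A_2 (h')^{−1} = −A_0^*. -/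
open Matrix

/-- if the triple `(A_0, A_1, A_2)` has scalar centraliser and
`h ∈ GL(k,ℂ)` conjugates `(A_0, A_1, A_2)` to `(−A_2^*, A_1^*, −A_0^*)`, then `h` is
Hermitian up to a unimodular scalar; in particular a Hermitian invertible `h'` realising
the same conjugation exists. -/
theorem conjugating_matrix_hermitian_up_to_phase (k : ℕ) (hk : 1 ≤ k)
    (A0 A1 A2 h : Matrix (Fin k) (Fin k) ℂ)
    (hcentral : ∀ B : Matrix (Fin k) (Fin k) ℂ,
      B * A0 = A0 * B → B * A1 = A1 * B → B * A2 = A2 * B →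
        ∃ c : ℂ, B = c • (1 : Matrix (Fin k) (Fin k) ℂ))
    (hh : IsUnit h)
    (h0 : h * A0 * h⁻¹ = -(A2ᴴ))
    (h1 : h * A1 * h⁻¹ = A1ᴴ)
    (h2 : h * A2 * h⁻¹ = -(A0ᴴ)) :
    (∃ ω : ℂ, ‖ω‖ = 1 ∧ (ω • h)ᴴ = ω • h) ∧
      ∃ h' : Matrix (Fin k) (Fin k) ℂ, IsUnit h' ∧ h'ᴴ = h' ∧
        h' * A0 * h'⁻¹ = -(A2ᴴ) ∧ h' * A1 * h'⁻¹ = A1ᴴ ∧ h' * A2 * h'⁻¹ = -(A0ᴴ) := by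
  have hd : IsUnit h.det := (Matrix.isUnit_iff_isUnit_det h).mp hh
  have hinv : h * h⁻¹ = 1 := Matrix.mul_nonsing_inv h hd
  have hinv' : h⁻¹ * h = 1 := Matrix.nonsing_inv_mul h hd
  -- basic conjugation relations without inverses on the right
  have e0 : h * A0 = -(A2ᴴ) * h := by
    calc h * A0 = (h * A0 * h⁻¹) * h := by
          rw [Matrix.mul_assoc (h * A0), hinv', Matrix.mul_one]
      _ = -(A2ᴴ) * h := by rw [h0]
  have e1 : h * A1 = A1ᴴ * h := by
    calc h * A1 = (h * A1 * h⁻¹) * h := by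
          rw [Matrix.mul_assoc (h * A1), hinv', Matrix.mul_one]
      _ = A1ᴴ * h := by rw [h1]
  have e2 : h * A2 = -(A0ᴴ) * h := by
    calc h * A2 = (h * A2 * h⁻¹) * h := by
          rw [Matrix.mul_assoc (h * A2), hinv', Matrix.mul_one]
      _ = -(A0ᴴ) * h := by rw [h2]
  -- and their versions with `h⁻¹`
  have e0' : A0 * h⁻¹ = -(h⁻¹ * A2ᴴ) := by
    calc A0 * h⁻¹ = h⁻¹ * (h * A0) * h⁻¹ := by
          rw [← Matrix.mul_assoc h⁻¹ h A0, hinv', Matrix.one_mul]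
      _ = h⁻¹ * (-(A2ᴴ) * h) * h⁻¹ := by rw [e0]
      _ = -(h⁻¹ * A2ᴴ) := by
          simp only [Matrix.mul_assoc]
          rw [hinv, Matrix.mul_one, Matrix.mul_neg]
  have e1' : A1 * h⁻¹ = h⁻¹ * A1ᴴ := by
    calc A1 * h⁻¹ = h⁻¹ * (h * A1) * h⁻¹ := by
          rw [← Matrix.mul_assoc h⁻¹ h A1, hinv', Matrix.one_mul]
      _ = h⁻¹ * (A1ᴴ * h) * h⁻¹ := by rw [e1]
      _ = h⁻¹ * A1ᴴ := by
          simp only [Matrix.mul_assoc]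
          rw [hinv, Matrix.mul_one]
  have e2' : A2 * h⁻¹ = -(h⁻¹ * A0ᴴ) := by
    calc A2 * h⁻¹ = h⁻¹ * (h * A2) * h⁻¹ := by
          rw [← Matrix.mul_assoc h⁻¹ h A2, hinv', Matrix.one_mul]
      _ = h⁻¹ * (-(A0ᴴ) * h) * h⁻¹ := by rw [e2]
      _ = -(h⁻¹ * A0ᴴ) := by
          simp only [Matrix.mul_assoc]
          rw [hinv, Matrix.mul_one, Matrix.mul_neg]
  -- conjugate transposes of the relations
  have f0 : A0ᴴ * hᴴ = -(hᴴ * A2) := by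
    have := congrArg Matrix.conjTranspose e0
    simpa [Matrix.conjTranspose_mul, Matrix.conjTranspose_neg, Matrix.mul_neg] using this
  have f1 : A1ᴴ * hᴴ = hᴴ * A1 := by
    have := congrArg Matrix.conjTranspose e1
    simpa [Matrix.conjTranspose_mul] using this
  have f2 : A2ᴴ * hᴴ = -(hᴴ * A0) := by
    have := congrArg Matrix.conjTranspose e2
    simpa [Matrix.conjTranspose_mul, Matrix.conjTranspose_neg, Matrix.mul_neg] using this
  -- B := h⁻¹ * hᴴ commutes with A0, A1, A2
  have comm0 : (h⁻¹ * hᴴ) * A0 = A0 * (h⁻¹ * hᴴ) := by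
    have hA0 : hᴴ * A0 = -(A2ᴴ * hᴴ) := by rw [f2, neg_neg]
    calc (h⁻¹ * hᴴ) * A0 = h⁻¹ * (hᴴ * A0) := by rw [Matrix.mul_assoc]
      _ = h⁻¹ * -(A2ᴴ * hᴴ) := by rw [hA0]
      _ = -(h⁻¹ * A2ᴴ) * hᴴ := by rw [Matrix.mul_neg, Matrix.neg_mul, Matrix.mul_assoc]
      _ = (A0 * h⁻¹) * hᴴ := by rw [e0']
      _ = A0 * (h⁻¹ * hᴴ) := by rw [Matrix.mul_assoc]
  have comm1 : (h⁻¹ * hᴴ) * A1 = A1 * (h⁻¹ * hᴴ) := by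
    calc (h⁻¹ * hᴴ) * A1 = h⁻¹ * (hᴴ * A1) := by rw [Matrix.mul_assoc]
      _ = h⁻¹ * (A1ᴴ * hᴴ) := by rw [f1]
      _ = (h⁻¹ * A1ᴴ) * hᴴ := by rw [Matrix.mul_assoc]
      _ = (A1 * h⁻¹) * hᴴ := by rw [e1']
      _ = A1 * (h⁻¹ * hᴴ) := by rw [Matrix.mul_assoc]
  have comm2 : (h⁻¹ * hᴴ) * A2 = A2 * (h⁻¹ * hᴴ) := by
    have hA2 : hᴴ * A2 = -(A0ᴴ * hᴴ) := by rw [f0, neg_neg]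
    calc (h⁻¹ * hᴴ) * A2 = h⁻¹ * (hᴴ * A2) := by rw [Matrix.mul_assoc]
      _ = h⁻¹ * -(A0ᴴ * hᴴ) := by rw [hA2]
      _ = -(h⁻¹ * A0ᴴ) * hᴴ := by rw [Matrix.mul_neg, Matrix.neg_mul, Matrix.mul_assoc]
      _ = (A2 * h⁻¹) * hᴴ := by rw [e2']
      _ = A2 * (h⁻¹ * hᴴ) := by rw [Matrix.mul_assoc]
  obtain ⟨c, hc⟩ := hcentral (h⁻¹ * hᴴ) comm0 comm1 comm2
  have hherm : hᴴ = c • h := by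
    calc hᴴ = h * (h⁻¹ * hᴴ) := by rw [← Matrix.mul_assoc, hinv, Matrix.one_mul]
      _ = h * (c • (1 : Matrix (Fin k) (Fin k) ℂ)) := by rw [hc]
      _ = c • h := by rw [Matrix.mul_smul, Matrix.mul_one]
  -- |c| = 1
  have i0 : Fin k := ⟨0, hk⟩
  have hcc : (starRingEnd ℂ) c * c = 1 := by
    have hsq : h = ((starRingEnd ℂ) c * c) • h := by
      conv_lhs => rw [← Matrix.conjTranspose_conjTranspose h, hherm,
        Matrix.conjTranspose_smul, hherm, smul_smul]
      rw [Complex.star_def]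
    have h1' : (((starRingEnd ℂ) c * c) • h) * h⁻¹ = h * h⁻¹ := by rw [← hsq]
    rw [Matrix.smul_mul, hinv] at h1'
    have := congrArg (fun M => M i0 i0) h1'
    simpa using this
  have hcabs : ‖c‖ = 1 := by
    have habs : ‖c‖ * ‖c‖ = 1 := by
      have := congrArg (‖·‖) hcc
      simpa [norm_mul, Complex.norm_conj] using this
    rcases mul_self_eq_one_iff.mp habs with h' | h'
    · exact h'
    · nlinarith [norm_nonneg c]
  obtain ⟨ω, hω⟩ := IsAlgClosed.exists_pow_nat_eq c (n := 2) two_pos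
  have hωabs : ‖ω‖ = 1 := by
    have : ‖ω‖ ^ 2 = 1 := by rw [← norm_pow, hω, hcabs]
    nlinarith [norm_nonneg ω]
  have hωne : ω ≠ 0 := by
    intro hzero; rw [hzero] at hωabs; simp at hωabs
  have hconjω : (starRingEnd ℂ) ω * ω = 1 := by
    have := Complex.normSq_eq_norm_sq ω
    rw [hωabs] at this
    rw [← Complex.normSq_eq_conj_mul_self] at *
    simp [this]
  have key : (ω • h)ᴴ = ω • h := by
    rw [Matrix.conjTranspose_smul, hherm, smul_smul]
    congr 1
    calc (starRingEnd ℂ) ω * c = (starRingEnd ℂ) ω * (ω * ω) := by rw [← hω, sq]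
      _ = ((starRingEnd ℂ) ω * ω) * ω := by ring
      _ = ω := by rw [hconjω, one_mul]
  refine ⟨⟨ω, hωabs, key⟩, ω • h, ?_, key, ?_⟩
  · have hmul : (ω • h) * (ω⁻¹ • h⁻¹) = 1 := by
      rw [Matrix.smul_mul, Matrix.mul_smul, smul_smul, mul_inv_cancel₀ hωne, one_smul, hinv]
    exact ⟨⟨ω • h, ω⁻¹ • h⁻¹, hmul, mul_eq_one_comm.mp hmul⟩, rfl⟩
  · have hmul : (ω • h) * (ω⁻¹ • h⁻¹) = 1 := by
      rw [Matrix.smul_mul, Matrix.mul_smul, smul_smul, mul_inv_cancel₀ hωne, one_smul, hinv]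
    have hinveq : (ω • h)⁻¹ = ω⁻¹ • h⁻¹ := Matrix.inv_eq_right_inv hmul
    have cancel : ∀ A : Matrix (Fin k) (Fin k) ℂ,
        (ω • h) * A * (ω • h)⁻¹ = h * A * h⁻¹ := by
      intro A
      rw [hinveq, Matrix.smul_mul, Matrix.smul_mul, Matrix.mul_smul, smul_smul,
        mul_inv_cancel₀ hωne, one_smul]
    exact ⟨by rw [cancel, h0], by rw [cancel, h1], by rw [cancel, h2]⟩
end

section
/- Let k ≥ 2 and assume the node condition on the spectral data. Suppose Z_1,…,Z_k ∈ ℂ[ζ] are polynomials of degree at most 2k−2 and c ∈ ℂ is a constant such that Σ_{s=1}^{k} Z_s(ζ) / ∏_{l≠s} (η_s(ζ) − η_l(ζ)) = c for every ζ ∈ ℂ with η_s(ζ) ≠ η_l(ζ) for all s ≠ l. Then Z_i(a_{ij}) = Z_j(a_{ij}) for all i ≠ j; that is, the Z_i are the restrictions to the components of a single section of O(2k−2) on the reducible spectral curve. -/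
namespace ReducibleSpectral

noncomputable section

/-- The node condition: the points `a_{ij} ∈ ℂ`, `(i,j) ∈ P`, are pairwise distinct. -/
def Nodes (k : ℕ) (x : Fin k → ℝ) (z : Fin k → ℂ) : Prop :=
  ∀ i j m n : Fin k, i ≠ j → m ≠ n →
    aa (x i) (x j) (z i) (z j) = aa (x m) (x n) (z m) (z n) → i = m ∧ j = n

lemma rr_symm (x x' : ℝ) (z z' : ℂ) : rr x' x z' z = rr x x' z z' := by
  unfold rr
  rw [show (x' - x)^2 = (x - x')^2 by ring, show z' - z = -(z - z') by ring,
    norm_neg]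

lemma eta_factor (x1 x2 : ℝ) (z1 z2 : ℂ) (h : z1 ≠ z2) (ζ : ℂ) :
    eta x1 z1 ζ - eta x2 z2 ζ =
      ((starRingEnd ℂ) z2 - (starRingEnd ℂ) z1) * (ζ - aa x1 x2 z1 z2) * (ζ - aa x2 x1 z2 z1) := by
  have hw : (starRingEnd ℂ) z1 - (starRingEnd ℂ) z2 ≠ 0 := by
    intro h'
    exact h (by simpa using congrArg (starRingEnd ℂ) (sub_eq_zero.mp h'))
  have hw' : (starRingEnd ℂ) z2 - (starRingEnd ℂ) z1 ≠ 0 := fun h' => hw (by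
    rw [show (starRingEnd ℂ) z1 - (starRingEnd ℂ) z2
        = -((starRingEnd ℂ) z2 - (starRingEnd ℂ) z1) by ring, h', neg_zero])
  have hr2 : ((rr x1 x2 z1 z2 : ℝ) : ℂ)^2
      = ((x1 : ℂ) - (x2 : ℂ))^2 + (z1 - z2) * ((starRingEnd ℂ) z1 - (starRingEnd ℂ) z2) := by
    have h1 : (rr x1 x2 z1 z2)^2 = (x1 - x2)^2 + ‖z1 - z2‖^2 := by
      rw [rr, Real.sq_sqrt (by positivity)]
    have h2 : (z1 - z2) * ((starRingEnd ℂ) z1 - (starRingEnd ℂ) z2)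
        = ((‖z1 - z2‖ ^ 2 : ℝ) : ℂ) := by
      rw [← map_sub, Complex.mul_conj, Complex.sq_norm]
    rw [h2, ← Complex.ofReal_pow, h1]
    push_cast
    ring
  rw [eta, eta, aa, aa, rr_symm x1 x2 z1 z2]
  field_simp
  push_cast
  linear_combination (-1 : ℂ) * hr2

/-- the two roots of `η_m - η_n` are the nodes -/
lemma eta_eq_cases {x1 x2 : ℝ} {z1 z2 : ℂ} (h : z1 ≠ z2) {ζ : ℂ}
    (he : eta x1 z1 ζ = eta x2 z2 ζ) :
    ζ = aa x1 x2 z1 z2 ∨ ζ = aa x2 x1 z2 z1 := by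
  have hw' : (starRingEnd ℂ) z2 - (starRingEnd ℂ) z1 ≠ 0 := by
    intro h'
    have : z2 = z1 := by simpa using congrArg (starRingEnd ℂ) (sub_eq_zero.mp h')
    exact h this.symm
  have h0 : ((starRingEnd ℂ) z2 - (starRingEnd ℂ) z1) * (ζ - aa x1 x2 z1 z2)
      * (ζ - aa x2 x1 z2 z1) = 0 := by
    rw [← eta_factor x1 x2 z1 z2 h ζ, he, sub_self]
  rcases mul_eq_zero.mp h0 with h1 | h1
  · rcases mul_eq_zero.mp h1 with h2 | h2
    · exact absurd h2 hw'
    · exact Or.inl (sub_eq_zero.mp h2)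
  · exact Or.inr (sub_eq_zero.mp h1)

/-- The key partial-fraction algebra, at the level of values in `ℂ`. -/
lemma val_identity {k : ℕ} (i j : Fin k) (hij : i ≠ j) (e W : Fin k → ℂ) (c : ℂ)
    (hd : ∀ s l : Fin k, s ≠ l → e s ≠ e l)
    (hc : ∑ s : Fin k, W s / ∏ l ∈ Finset.univ.erase s, (e s - e l) = c) :
    (W i * (∏ l ∈ (Finset.univ.erase i).erase j, (e j - e l)) -
     W j * (∏ l ∈ (Finset.univ.erase i).erase j, (e i - e l))) *
      ∏ s ∈ (Finset.univ.erase i).erase j, (∏ l ∈ Finset.univ.erase s, (e s - e l))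
    + ∑ s ∈ (Finset.univ.erase i).erase j,
        (e i - e j) * W s * (∏ l ∈ (Finset.univ.erase i).erase j, (e i - e l)) *
        (∏ l ∈ (Finset.univ.erase i).erase j, (e j - e l)) *
        ∏ t ∈ ((Finset.univ.erase i).erase j).erase s,
          (∏ l ∈ Finset.univ.erase t, (e t - e l))
    = c * ((e i - e j) * ((∏ l ∈ (Finset.univ.erase i).erase j, (e i - e l)) *
        ((∏ l ∈ (Finset.univ.erase i).erase j, (e j - e l)) *
         ∏ s ∈ (Finset.univ.erase i).erase j,
           (∏ l ∈ Finset.univ.erase s, (e s - e l))))) := by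
  classical
  set T : Finset (Fin k) := (Finset.univ.erase i).erase j with hT
  set pv : Fin k → ℂ := fun s => ∏ l ∈ Finset.univ.erase s, (e s - e l) with hpv
  have hiT : i ∉ T := by simp [hT]
  have hjT : j ∉ T := by simp [hT]
  have hins_j : insert j T = Finset.univ.erase i :=
    Finset.insert_erase (Finset.mem_erase.mpr ⟨Ne.symm hij, Finset.mem_univ j⟩)
  have hTcomm : T = (Finset.univ.erase j).erase i := by
    ext t; simp [hT, Finset.mem_erase]; tauto
  have hins_i : insert i T = Finset.univ.erase j := by
    rw [hTcomm]
    exact Finset.insert_erase (Finset.mem_erase.mpr ⟨hij, Finset.mem_univ i⟩)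
  have huniv : (Finset.univ : Finset (Fin k)) = insert i (insert j T) := by
    rw [hins_j, Finset.insert_erase (Finset.mem_univ i)]
  have hsub : ∀ s l : Fin k, s ≠ l → e s - e l ≠ 0 := fun s l h => sub_ne_zero.mpr (hd s l h)
  have hp : ∀ s, pv s ≠ 0 := by
    intro s
    rw [hpv]
    exact Finset.prod_ne_zero_iff.mpr fun l hl => hsub s l (Ne.symm (Finset.mem_erase.mp hl).1)
  have hE : e i - e j ≠ 0 := hsub i j hij
  have hqi : (∏ l ∈ T, (e i - e l)) ≠ 0 :=
    Finset.prod_ne_zero_iff.mpr fun l hl => hsub i l (by rintro rfl; exact hiT hl)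
  have hqj : (∏ l ∈ T, (e j - e l)) ≠ 0 :=
    Finset.prod_ne_zero_iff.mpr fun l hl => hsub j l (by rintro rfl; exact hjT hl)
  set qi : ℂ := ∏ l ∈ T, (e i - e l) with hqidef
  set qj : ℂ := ∏ l ∈ T, (e j - e l) with hqjdef
  set Pi : ℂ := ∏ s ∈ T, pv s with hPidef
  have hPine : Pi ≠ 0 := by
    rw [hPidef]; exact Finset.prod_ne_zero_iff.mpr fun s _ => hp s
  have hpvi : pv i = (e i - e j) * qi := by
    rw [show pv i = ∏ l ∈ Finset.univ.erase i, (e i - e l) from rfl, ← hins_j,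
      Finset.prod_insert hjT, hqidef]
  have hpvj : pv j = -((e i - e j) * qj) := by
    rw [show pv j = ∏ l ∈ Finset.univ.erase j, (e j - e l) from rfl, ← hins_i,
      Finset.prod_insert hiT, hqjdef]
    ring
  set M : ℂ := (e i - e j) * (qi * (qj * Pi)) with hM
  have h1 : W i / pv i * M = W i * qj * Pi := by
    rw [hpvi, hM]
    field_simp
  have h2 : W j / pv j * M = -(W j * qi * Pi) := by
    rw [hpvj, hM]
    field_simp
  have h3 : ∀ s ∈ T, W s / pv s * M = (e i - e j) * W s * qi * qj * ∏ t ∈ T.erase s, pv t := by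
    intro s hs
    have hps : Pi = pv s * ∏ t ∈ T.erase s, pv t := (Finset.mul_prod_erase T pv hs).symm
    have hpsne := hp s
    rw [hM, hps]
    field_simp
  calc (W i * qj - W j * qi) * Pi
        + ∑ s ∈ T, (e i - e j) * W s * qi * qj * ∏ t ∈ T.erase s, pv t
      = W i / pv i * M + (W j / pv j * M + ∑ s ∈ T, W s / pv s * M) := by
        rw [h1, h2, Finset.sum_congr rfl h3]
        ring
    _ = (∑ s : Fin k, W s / pv s) * M := by
        rw [huniv, Finset.sum_insert (by simp [Finset.mem_insert, hiT, hij]),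
          Finset.sum_insert hjT, add_mul, add_mul, Finset.sum_mul]
    _ = c * M := by rw [hc]

/-- if `Σ_s Z_s(ζ)/∏_{l≠s}(η_s(ζ)−η_l(ζ))` is a constant `c` (wherever the
`η_s(ζ)` are pairwise distinct), where `deg Z_s ≤ 2k−2`, then `Z_i(a_{ij}) = Z_j(a_{ij})`
for all `i ≠ j`: the `Z_i` glue to a section of `O(2k−2)` on the reducible spectral
curve. -/
theorem matching_of_constant_sum (k : ℕ) (hk : 2 ≤ k)
    (x : Fin k → ℝ) (z : Fin k → ℂ) (hz : Function.Injective z)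
    (hnode : Nodes k x z)
    (Z : Fin k → Polynomial ℂ) (hdeg : ∀ i, (Z i).degree ≤ (2 * k - 2 : ℕ)) (c : ℂ)
    (hsum : ∀ ζ : ℂ, (∀ s l : Fin k, s ≠ l → eta (x s) (z s) ζ ≠ eta (x l) (z l) ζ) →
      ∑ s : Fin k, (Z s).eval ζ /
        ∏ l ∈ Finset.univ.erase s, (eta (x s) (z s) ζ - eta (x l) (z l) ζ) = c) :
    ∀ i j : Fin k, i ≠ j →
      (Z i).eval (aa (x i) (x j) (z i) (z j)) = (Z j).eval (aa (x i) (x j) (z i) (z j)) := by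
  classical
  intro i j hij
  have hzne : ∀ m n : Fin k, m ≠ n → z m ≠ z n := fun m n h e => h (hz e)
  set a := aa (x i) (x j) (z i) (z j) with ha
  -- only the components i and j collide at the node a
  have key2 : ∀ m n : Fin k, m ≠ n → ¬(m = i ∧ n = j) → ¬(m = j ∧ n = i) →
      eta (x m) (z m) a ≠ eta (x n) (z n) a := by
    intro m n hmn h1 h2 he
    rcases eta_eq_cases (hzne m n hmn) he with h3 | h3
    · obtain ⟨e1, e2⟩ := hnode i j m n hij hmn h3
      exact h1 ⟨e1.symm, e2.symm⟩
    · obtain ⟨e1, e2⟩ := hnode i j n m hij (Ne.symm hmn) h3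
      exact h2 ⟨e2.symm, e1.symm⟩
  have hetaij : eta (x i) (z i) a = eta (x j) (z j) a := by
    have hf := eta_factor (x i) (x j) (z i) (z j) (hzne i j hij) a
    rw [← ha, sub_self, mul_zero, zero_mul] at hf
    exact sub_eq_zero.mp hf
  -- polynomial encodings
  set Pe : Fin k → Polynomial ℂ := fun s =>
    Polynomial.C (z s) + Polynomial.C (2 * (x s : ℂ)) * Polynomial.X
      - Polynomial.C ((starRingEnd ℂ) (z s)) * Polynomial.X ^ 2 with hPedef
  have hPeval : ∀ (s : Fin k) (ζ : ℂ), (Pe s).eval ζ = eta (x s) (z s) ζ := by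
    intro s ζ; simp [hPedef, eta]
  set T : Finset (Fin k) := (Finset.univ.erase i).erase j with hT
  set A : Polynomial ℂ :=
    (Z i * ∏ l ∈ T, (Pe j - Pe l) - Z j * ∏ l ∈ T, (Pe i - Pe l)) *
      ∏ s ∈ T, (∏ l ∈ Finset.univ.erase s, (Pe s - Pe l))
    + ∑ s ∈ T, (Pe i - Pe j) * Z s * (∏ l ∈ T, (Pe i - Pe l)) * (∏ l ∈ T, (Pe j - Pe l)) *
        ∏ t ∈ T.erase s, (∏ l ∈ Finset.univ.erase t, (Pe t - Pe l)) with hA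
  set B : Polynomial ℂ := Polynomial.C c * ((Pe i - Pe j) * ((∏ l ∈ T, (Pe i - Pe l)) *
      ((∏ l ∈ T, (Pe j - Pe l)) *
        ∏ s ∈ T, (∏ l ∈ Finset.univ.erase s, (Pe s - Pe l))))) with hB
  -- the set of "bad" points is finite
  set S : Set ℂ := ⋃ (m : Fin k), ⋃ (n : Fin k), {aa (x m) (x n) (z m) (z n)} with hS
  have hSfin : S.Finite :=
    Set.finite_iUnion fun m => Set.finite_iUnion fun n => Set.finite_singleton _
  have hgen : ∀ ζ ∉ S, ∀ s l : Fin k, s ≠ l → eta (x s) (z s) ζ ≠ eta (x l) (z l) ζ := by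
    intro ζ hζ s l hsl he
    rcases eta_eq_cases (hzne s l hsl) he with h3 | h3
    · exact hζ (by rw [hS]; exact Set.mem_iUnion.mpr ⟨s, Set.mem_iUnion.mpr ⟨l, by simp [h3]⟩⟩)
    · exact hζ (by rw [hS]; exact Set.mem_iUnion.mpr ⟨l, Set.mem_iUnion.mpr ⟨s, by simp [h3]⟩⟩)
  have hAB : A = B := by
    apply Polynomial.eq_of_infinite_eval_eq
    apply Set.Infinite.mono _ (hSfin.infinite_compl)
    intro ζ hζ
    have hd := hgen ζ hζ
    have hc := hsum ζ hd
    show A.eval ζ = B.eval ζ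
    simp only [hA, hB, Polynomial.eval_add, Polynomial.eval_sub, Polynomial.eval_mul,
      Polynomial.eval_prod, Polynomial.eval_finset_sum, Polynomial.eval_C, hPeval, hT]
    exact val_identity i j hij (fun s => eta (x s) (z s) ζ) (fun s => (Z s).eval ζ) c hd hc
  -- evaluate the polynomial identity at the node a
  have hval := congrArg (Polynomial.eval a) hAB
  simp only [hA, hB, Polynomial.eval_add, Polynomial.eval_sub, Polynomial.eval_mul,
    Polynomial.eval_prod, Polynomial.eval_finset_sum, Polynomial.eval_C, hPeval] at hval
  have hE0 : eta (x i) (z i) a - eta (x j) (z j) a = 0 := sub_eq_zero.mpr hetaij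
  rw [hE0] at hval
  simp only [zero_mul, mul_zero, Finset.sum_const_zero, add_zero] at hval
  -- the two gluing products agree and are nonzero
  have hqeq : (∏ l ∈ T, (eta (x j) (z j) a - eta (x l) (z l) a))
      = ∏ l ∈ T, (eta (x i) (z i) a - eta (x l) (z l) a) :=
    Finset.prod_congr rfl fun l _ => by rw [hetaij]
  have hmemT : ∀ l ∈ T, l ≠ i ∧ l ≠ j := by
    intro l hl
    have h1 := Finset.mem_erase.mp hl
    have h2 := Finset.mem_erase.mp h1.2
    exact ⟨h2.1, h1.1⟩
  have hqne : (∏ l ∈ T, (eta (x i) (z i) a - eta (x l) (z l) a)) ≠ 0 := by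
    refine Finset.prod_ne_zero_iff.mpr fun l hl => sub_ne_zero.mpr ?_
    obtain ⟨hli, hlj⟩ := hmemT l hl
    exact key2 i l (Ne.symm hli) (fun h => hlj h.2) (fun h => hij h.1)
  have hPne : (∏ s ∈ T, (∏ l ∈ Finset.univ.erase s,
      (eta (x s) (z s) a - eta (x l) (z l) a))) ≠ 0 := by
    refine Finset.prod_ne_zero_iff.mpr fun s hs => Finset.prod_ne_zero_iff.mpr fun l hl => ?_
    obtain ⟨hsi, hsj⟩ := hmemT s hs
    have hls : l ≠ s := (Finset.mem_erase.mp hl).1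
    exact sub_ne_zero.mpr
      (key2 s l (Ne.symm hls) (fun h => hsi h.1) (fun h => hsj h.1))
  rw [hqeq] at hval
  have hfac : ((Z i).eval a - (Z j).eval a) *
      ((∏ l ∈ T, (eta (x i) (z i) a - eta (x l) (z l) a)) *
       (∏ s ∈ T, (∏ l ∈ Finset.univ.erase s,
        (eta (x s) (z s) a - eta (x l) (z l) a)))) = 0 := by
    linear_combination hval
  rcases mul_eq_zero.mp hfac with h | h
  · exact sub_eq_zero.mp h
  · exact absurd h (mul_ne_zero hqne hPne)

end

end ReducibleSpectral
end

section
/- Let k ≥ 2 and assume the node condition on the spectral data. Suppose Z_1,…,Z_k ∈ ℂ[ζ] are polynomials of degree at most 2k−2 such that Z_i(a_{ij}) = Z_j(a_{ij}) for all i ≠ j. Then there exists a constant c ∈ ℂ such that Σ_{s=1}^{k} Z_s(ζ) / ∏_{l≠s} (η_s(ζ) − η_l(ζ)) = c for every ζ ∈ ℂ with η_s(ζ) ≠ η_l(ζ) for all s ≠ l. -/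
namespace ReducibleSpectral

noncomputable section

lemma conj_sub_ne (z z' : ℂ) (h : z ≠ z') :
    (starRingEnd ℂ) z - (starRingEnd ℂ) z' ≠ 0 := by
  intro hc
  exact h (by simpa using congrArg (starRingEnd ℂ) (sub_eq_zero.mp hc))

lemma eta_sub_eta (x x' : ℝ) (z z' : ℂ) (h : z ≠ z') (ζ : ℂ) :
    eta x z ζ - eta x' z' ζ =
      ((starRingEnd ℂ) z' - (starRingEnd ℂ) z) * (ζ - aa x x' z z') * (ζ - aa x' x z' z) := by
  have hw : (starRingEnd ℂ) z - (starRingEnd ℂ) z' ≠ 0 := conj_sub_ne z z' h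
  set w : ℂ := (starRingEnd ℂ) z - (starRingEnd ℂ) z' with hwdef
  set r : ℝ := rr x x' z z' with hrdef
  set a : ℂ := aa x x' z z' with hadef
  set b : ℂ := aa x' x z' z with hbdef
  have hr2 : ((r : ℝ) : ℂ) ^ 2 = ((x : ℂ) - (x' : ℂ)) ^ 2 + (z - z') * w := by
    have h1 : r ^ 2 = (x - x') ^ 2 + ‖z - z'‖ ^ 2 := by
      rw [hrdef]; unfold rr; rw [Real.sq_sqrt]; positivity
    have h2 : ((‖z - z'‖ : ℝ) : ℂ) ^ 2 = (z - z') * w := by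
      calc ((‖z - z'‖ : ℝ) : ℂ) ^ 2
          = ((Complex.normSq (z - z') : ℝ) : ℂ) := by rw [← Complex.sq_norm]; push_cast; ring
        _ = (z - z') * (starRingEnd ℂ) (z - z') := (Complex.mul_conj _).symm
        _ = (z - z') * w := by rw [map_sub]
    calc ((r : ℝ) : ℂ) ^ 2 = ((r ^ 2 : ℝ) : ℂ) := by push_cast; ring
      _ = (((x - x') ^ 2 + ‖z - z'‖ ^ 2 : ℝ) : ℂ) := by rw [h1]
      _ = _ := by push_cast [← h2]; ring
  have ha : w * a = ((x : ℂ) - (x' : ℂ)) + ((r : ℝ) : ℂ) := by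
    have : a = ((((x - x' : ℝ)) : ℂ) + ((r : ℝ) : ℂ)) / w := by
      rw [hadef]; unfold aa; rw [← hrdef, ← hwdef]
    rw [this, mul_div_cancel₀ _ hw]; push_cast; ring
  have hb : w * b = ((x : ℂ) - (x' : ℂ)) - ((r : ℝ) : ℂ) := by
    have hnw : -w ≠ 0 := neg_ne_zero.mpr hw
    have : b = ((((x' - x : ℝ)) : ℂ) + ((r : ℝ) : ℂ)) / (-w) := by
      rw [hbdef]; unfold aa; rw [rr_symm, ← hrdef]
      rw [show (starRingEnd ℂ) z' - (starRingEnd ℂ) z = -w by rw [hwdef]; ring]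
    have h2 := mul_div_cancel₀ ((((x' - x : ℝ)) : ℂ) + ((r : ℝ) : ℂ)) hnw
    rw [this]
    push_cast at h2 ⊢
    linear_combination -h2
  have key : w * (eta x z ζ - eta x' z' ζ) = w * (-w * (ζ - a) * (ζ - b)) := by
    unfold eta
    linear_combination (w * b - w * ζ) * ha + (((x : ℂ) - (x' : ℂ)) + ((r : ℝ) : ℂ) - w * ζ) * hb
      - hr2 + (w * ζ ^ 2) * hwdef
  have hcan := mul_left_cancel₀ hw key
  rw [hcan]; ring

lemma prod_offDiag_split {α M : Type*} [DecidableEq α] [CommMonoid M] (W : Finset α) {s : α}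
    (hs : s ∈ W) (f : α × α → M) :
    ∏ p ∈ W.offDiag, f p =
      (∏ l ∈ W.erase s, (f (s, l) * f (l, s))) * ∏ p ∈ (W.erase s).offDiag, f p := by
  classical
  set A : Finset (α × α) := (W.erase s).image (fun l => (s, l)) with hA
  set B : Finset (α × α) := (W.erase s).image (fun l => (l, s)) with hB
  have hAB : Disjoint A B := by
    rw [Finset.disjoint_left]
    rintro ⟨p1, p2⟩ hpA hpB
    simp only [hA, hB, Finset.mem_image, Finset.mem_erase, Prod.ext_iff] at hpA hpB
    obtain ⟨l, ⟨hl, -⟩, rfl, rfl⟩ := hpA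
    obtain ⟨m, ⟨hm, -⟩, h1, rfl⟩ := hpB
    exact hm h1
  have hABC : Disjoint (A ∪ B) ((W.erase s).offDiag) := by
    rw [Finset.disjoint_left]
    rintro ⟨p1, p2⟩ hpA hpC
    simp only [hA, hB, Finset.mem_union, Finset.mem_image, Finset.mem_erase, Prod.ext_iff] at hpA
    simp only [Finset.mem_offDiag, Finset.mem_erase] at hpC
    rcases hpA with ⟨l, ⟨hl, -⟩, h1, h2⟩ | ⟨l, ⟨hl, -⟩, h1, h2⟩
    · exact hpC.1.1 h1.symm
    · exact hpC.2.1.1 h2.symm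
  have hunion : W.offDiag = (A ∪ B) ∪ (W.erase s).offDiag := by
    ext ⟨p1, p2⟩
    simp only [hA, hB, Finset.mem_union, Finset.mem_image, Finset.mem_erase,
      Finset.mem_offDiag, Prod.ext_iff]
    constructor
    · rintro ⟨h1, h2, h3⟩
      by_cases e1 : p1 = s
      · subst e1
        exact Or.inl (Or.inl ⟨p2, ⟨fun hc => h3 hc.symm, h2⟩, rfl, rfl⟩)
      by_cases e2 : p2 = s
      · subst e2
        exact Or.inl (Or.inr ⟨p1, ⟨e1, h1⟩, rfl, rfl⟩)
      · exact Or.inr ⟨⟨e1, h1⟩, ⟨e2, h2⟩, h3⟩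
    · rintro ((⟨l, ⟨hl, hlW⟩, rfl, rfl⟩ | ⟨l, ⟨hl, hlW⟩, rfl, rfl⟩) | ⟨⟨-, h1⟩, ⟨-, h2⟩, h3⟩)
      · exact ⟨hs, hlW, fun hc => hl hc.symm⟩
      · exact ⟨hlW, hs, hl⟩
      · exact ⟨h1, h2, h3⟩
  rw [hunion, Finset.prod_union hABC, Finset.prod_union hAB]
  congr 1
  rw [Finset.prod_mul_distrib]
  congr 1
  · rw [hA, Finset.prod_image]
    intro a _ b _ hab
    simpa using hab
  · rw [hB, Finset.prod_image]
    intro a _ b _ hab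
    simpa using hab

/-- conversely, if the `Z_i` (of degree `≤ 2k−2`) satisfy the matching
conditions `Z_i(a_{ij}) = Z_j(a_{ij})`, then `Σ_s Z_s(ζ)/∏_{l≠s}(η_s(ζ)−η_l(ζ))` is
constant wherever the `η_s(ζ)` are pairwise distinct. -/
theorem constant_sum_of_matching (k : ℕ) (hk : 2 ≤ k)
    (x : Fin k → ℝ) (z : Fin k → ℂ) (hz : Function.Injective z)
    (hnode : Nodes k x z)
    (Z : Fin k → Polynomial ℂ) (hdeg : ∀ i, (Z i).degree ≤ (2 * k - 2 : ℕ))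
    (hmatch : ∀ i j : Fin k, i ≠ j →
      (Z i).eval (aa (x i) (x j) (z i) (z j)) = (Z j).eval (aa (x i) (x j) (z i) (z j))) :
    ∃ c : ℂ, ∀ ζ : ℂ, (∀ s l : Fin k, s ≠ l → eta (x s) (z s) ζ ≠ eta (x l) (z l) ζ) →
      ∑ s : Fin k, (Z s).eval ζ /
        ∏ l ∈ Finset.univ.erase s, (eta (x s) (z s) ζ - eta (x l) (z l) ζ) = c := by
  classical
  have hzne : ∀ i j : Fin k, i ≠ j → z i ≠ z j := fun i j hij hc => hij (hz hc)
  set A : Fin k × Fin k → ℂ := fun p => aa (x p.1) (x p.2) (z p.1) (z p.2) with hAdef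
  set P : Finset (Fin k × Fin k) := Finset.univ.offDiag with hPdef
  have hfact : ∀ i j : Fin k, i ≠ j → ∀ ζ : ℂ,
      eta (x i) (z i) ζ - eta (x j) (z j) ζ =
        ((starRingEnd ℂ) (z j) - (starRingEnd ℂ) (z i)) * (ζ - A (i, j)) * (ζ - A (j, i)) :=
    fun i j hij ζ => eta_sub_eta _ _ _ _ (hzne i j hij) ζ
  have hroot : ∀ i j : Fin k, i ≠ j →
      eta (x i) (z i) (A (i, j)) = eta (x j) (z j) (A (i, j)) := by
    intro i j hij
    have h0 := hfact i j hij (A (i, j))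
    have h1 : eta (x i) (z i) (A (i, j)) - eta (x j) (z j) (A (i, j)) = 0 := by
      rw [h0]; ring
    exact sub_eq_zero.mp h1
  set T : Polynomial ℂ := ∏ p ∈ P, (Polynomial.X - Polynomial.C (A p)) with hTdef
  set R : Fin k → Polynomial ℂ :=
    fun s => ∏ p ∈ (Finset.univ.erase s).offDiag, (Polynomial.X - Polynomial.C (A p)) with hRdef
  set c : Fin k → ℂ :=
    fun s => ∏ l ∈ Finset.univ.erase s, ((starRingEnd ℂ) (z l) - (starRingEnd ℂ) (z s)) with hcdef
  have hcne : ∀ s, c s ≠ 0 := by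
    intro s
    rw [hcdef]
    apply Finset.prod_ne_zero_iff.mpr
    intro l hl
    exact conj_sub_ne _ _ (hzne l s (Finset.ne_of_mem_erase hl))
  set N : Polynomial ℂ := ∑ s : Fin k, Polynomial.C (c s)⁻¹ * Z s * R s with hNdef
  set D : ℕ := k * k - k with hDdef
  have hPcard : P.card = D := by
    rw [hPdef, Finset.offDiag_card, hDdef]
    simp
  -- evaluations
  have hTev : ∀ ζ : ℂ, T.eval ζ = ∏ p ∈ P, (ζ - A p) := by
    intro ζ; rw [hTdef, Polynomial.eval_prod]; simp
  have hRev : ∀ (s : Fin k) (ζ : ℂ),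
      (R s).eval ζ = ∏ p ∈ (Finset.univ.erase s).offDiag, (ζ - A p) := by
    intro s ζ; rw [hRdef]; rw [Polynomial.eval_prod]; simp
  have hTsplit : ∀ (s : Fin k) (ζ : ℂ), T.eval ζ =
      (∏ l ∈ Finset.univ.erase s, ((ζ - A (s, l)) * (ζ - A (l, s)))) * (R s).eval ζ := by
    intro s ζ
    rw [hTev, hRev, hPdef]
    exact prod_offDiag_split Finset.univ (Finset.mem_univ s) (fun p => ζ - A p)
  have hQT : ∀ (s : Fin k) (ζ : ℂ),
      (∏ l ∈ Finset.univ.erase s, (eta (x s) (z s) ζ - eta (x l) (z l) ζ)) * (R s).eval ζ =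
        c s * T.eval ζ := by
    intro s ζ
    have h1 : ∏ l ∈ Finset.univ.erase s, (eta (x s) (z s) ζ - eta (x l) (z l) ζ) =
        c s * ∏ l ∈ Finset.univ.erase s, ((ζ - A (s, l)) * (ζ - A (l, s))) := by
      rw [hcdef, ← Finset.prod_mul_distrib]
      refine Finset.prod_congr rfl (fun l hl => ?_)
      rw [hfact s l (Finset.ne_of_mem_erase hl).symm ζ]
      ring
    rw [h1, hTsplit s ζ]
    ring
  -- degrees
  have hTdeg : T.natDegree = D := by
    rw [hTdef, Polynomial.natDegree_prod _ _ (fun p _ => Polynomial.X_sub_C_ne_zero (A p))]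
    simp [Polynomial.natDegree_X_sub_C, hPcard]
  have hTmonic : T.Monic :=
    Polynomial.monic_prod_of_monic _ _ (fun p _ => Polynomial.monic_X_sub_C (A p))
  have hNdeg : N.natDegree ≤ D := by
    rw [hNdef]
    apply Polynomial.natDegree_sum_le_of_forall_le
    intro s _
    have h1 : (Z s).natDegree ≤ 2 * k - 2 := Polynomial.natDegree_le_of_degree_le (hdeg s)
    have h2 : (R s).natDegree ≤ (k - 1) * (k - 1) - (k - 1) := by
      rw [hRdef]
      refine le_trans (Polynomial.natDegree_prod_le _ _) ?_
      have : ∀ p ∈ (Finset.univ.erase s).offDiag,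
          (Polynomial.X - Polynomial.C (A p)).natDegree ≤ 1 := by
        intro p _; rw [Polynomial.natDegree_X_sub_C]
      refine le_trans (Finset.sum_le_card_nsmul _ _ 1 this) ?_
      rw [Finset.offDiag_card, Finset.card_erase_of_mem (Finset.mem_univ s)]
      simp
    calc (Polynomial.C (c s)⁻¹ * Z s * R s).natDegree
        ≤ (Polynomial.C (c s)⁻¹ * Z s).natDegree + (R s).natDegree :=
          Polynomial.natDegree_mul_le
      _ ≤ (Polynomial.C (c s)⁻¹).natDegree + (Z s).natDegree + (R s).natDegree := by
          exact Nat.add_le_add_right Polynomial.natDegree_mul_le _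
      _ = (Z s).natDegree + (R s).natDegree := by rw [Polynomial.natDegree_C, zero_add]
      _ ≤ (2 * k - 2) + ((k - 1) * (k - 1) - (k - 1)) := add_le_add h1 h2
      _ ≤ D := by
          rw [hDdef]
          zify [show 2 ≤ 2 * k by omega, show (k : ℕ) ≤ k * k from Nat.le_mul_of_pos_left k (by omega),
            show k - 1 ≤ (k - 1) * (k - 1) from Nat.le_mul_of_pos_left _ (by omega),
            show 1 ≤ k by omega]
          have hexp : ((k : ℤ) - 1) * ((k : ℤ) - 1) - ((k : ℤ) - 1) + (2 * (k : ℤ) - 2) =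
              (k : ℤ) * (k : ℤ) - (k : ℤ) := by ring
          linarith
  -- the sum polynomial vanishes at every node
  have hNval : ∀ i j : Fin k, i ≠ j → N.eval (A (i, j)) = 0 := by
    intro i j hij
    set a : ℂ := A (i, j) with hadef
    have haroot : eta (x i) (z i) a = eta (x j) (z j) a := hroot i j hij
    have hRz : ∀ s : Fin k, s ≠ i → s ≠ j → (R s).eval a = 0 := by
      intro s hsi hsj
      rw [hRev]
      refine Finset.prod_eq_zero (i := (i, j)) ?_ ?_
      · rw [Finset.mem_offDiag]
        exact ⟨Finset.mem_erase.mpr ⟨Ne.symm hsi, Finset.mem_univ i⟩,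
          Finset.mem_erase.mpr ⟨Ne.symm hsj, Finset.mem_univ j⟩, hij⟩
      · rw [hadef]; ring
    have hsum : N.eval a =
        (c i)⁻¹ * ((Z i).eval a) * ((R i).eval a) +
        (c j)⁻¹ * ((Z j).eval a) * ((R j).eval a) := by
      rw [hNdef, Polynomial.eval_finset_sum]
      rw [← Finset.sum_subset (Finset.subset_univ ({i, j} : Finset (Fin k)))]
      · rw [Finset.sum_pair hij]
        simp [Polynomial.eval_mul, Polynomial.eval_C]
      · intro s _ hs
        simp only [Finset.mem_insert, Finset.mem_singleton] at hs
        push_neg at hs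
        simp [Polynomial.eval_mul, hRz s hs.1 hs.2]
    set V : Finset (Fin k) := (Finset.univ.erase i).erase j with hVdef
    have hjmem : j ∈ Finset.univ.erase i := Finset.mem_erase.mpr ⟨Ne.symm hij, Finset.mem_univ j⟩
    have himem : i ∈ Finset.univ.erase j := Finset.mem_erase.mpr ⟨hij, Finset.mem_univ i⟩
    have hVmem : ∀ l ∈ V, l ≠ i ∧ l ≠ j := by
      intro l hl
      rw [hVdef] at hl
      rw [Finset.mem_erase] at hl
      exact ⟨(Finset.mem_erase.mp hl.2).1, hl.1⟩
    have hVj : (Finset.univ.erase j).erase i = V := by rw [hVdef, Finset.erase_right_comm]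
    have hRieval : (R i).eval a =
        (∏ l ∈ V, ((a - A (j, l)) * (a - A (l, j)))) * ∏ p ∈ V.offDiag, (a - A p) := by
      rw [hRev]
      rw [prod_offDiag_split (Finset.univ.erase i) hjmem (fun p => a - A p)]
    have hRjeval : (R j).eval a =
        (∏ l ∈ V, ((a - A (i, l)) * (a - A (l, i)))) * ∏ p ∈ V.offDiag, (a - A p) := by
      rw [hRev]
      rw [prod_offDiag_split (Finset.univ.erase j) himem (fun p => a - A p), hVj]
    have hpair : ∀ s l : Fin k, s ≠ l →
        (a - A (s, l)) * (a - A (l, s)) =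
          ((starRingEnd ℂ) (z l) - (starRingEnd ℂ) (z s))⁻¹ *
            (eta (x s) (z s) a - eta (x l) (z l) a) := by
      intro s l hsl
      have h1 := hfact s l hsl a
      have hne := conj_sub_ne (z l) (z s) (hzne l s (Ne.symm hsl))
      rw [h1]
      field_simp
    have hanti : c j * (R i).eval a + c i * (R j).eval a = 0 := by
      set K : ℂ := ∏ p ∈ V.offDiag, (a - A p) with hK
      set E : ℂ := ∏ l ∈ V, (eta (x j) (z j) a - eta (x l) (z l) a) with hE
      have hprodRi : ∏ l ∈ V, ((a - A (j, l)) * (a - A (l, j))) =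
          (∏ l ∈ V, ((starRingEnd ℂ) (z l) - (starRingEnd ℂ) (z j))⁻¹) * E := by
        rw [hE, ← Finset.prod_mul_distrib]
        refine Finset.prod_congr rfl (fun l hl => ?_)
        exact hpair j l (Ne.symm (hVmem l hl).2)
      have hprodRj : ∏ l ∈ V, ((a - A (i, l)) * (a - A (l, i))) =
          (∏ l ∈ V, ((starRingEnd ℂ) (z l) - (starRingEnd ℂ) (z i))⁻¹) * E := by
        rw [hE, ← Finset.prod_mul_distrib]
        refine Finset.prod_congr rfl (fun l hl => ?_)
        rw [hpair i l (Ne.symm (hVmem l hl).1), haroot]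
      have hcj : c j = ((starRingEnd ℂ) (z i) - (starRingEnd ℂ) (z j)) *
          ∏ l ∈ V, ((starRingEnd ℂ) (z l) - (starRingEnd ℂ) (z j)) := by
        simp only [hcdef]; rw [← Finset.mul_prod_erase _ _ himem, hVj]
      have hci : c i = ((starRingEnd ℂ) (z j) - (starRingEnd ℂ) (z i)) *
          ∏ l ∈ V, ((starRingEnd ℂ) (z l) - (starRingEnd ℂ) (z i)) := by
        simp only [hcdef]; rw [← Finset.mul_prod_erase _ _ hjmem, hVdef]
      have hinvj : (∏ l ∈ V, ((starRingEnd ℂ) (z l) - (starRingEnd ℂ) (z j))) *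
          (∏ l ∈ V, ((starRingEnd ℂ) (z l) - (starRingEnd ℂ) (z j))⁻¹) = 1 := by
        rw [← Finset.prod_mul_distrib]
        refine Finset.prod_eq_one (fun l hl => ?_)
        exact mul_inv_cancel₀ (conj_sub_ne _ _ (hzne l j (hVmem l hl).2))
      have hinvi : (∏ l ∈ V, ((starRingEnd ℂ) (z l) - (starRingEnd ℂ) (z i))) *
          (∏ l ∈ V, ((starRingEnd ℂ) (z l) - (starRingEnd ℂ) (z i))⁻¹) = 1 := by
        rw [← Finset.prod_mul_distrib]
        refine Finset.prod_eq_one (fun l hl => ?_)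
        exact mul_inv_cancel₀ (conj_sub_ne _ _ (hzne l i (hVmem l hl).1))
      rw [hRieval, hRjeval, hprodRi, hprodRj, hcj, hci]
      linear_combination (((starRingEnd ℂ) (z i) - (starRingEnd ℂ) (z j)) * E * K) * hinvj +
        (((starRingEnd ℂ) (z j) - (starRingEnd ℂ) (z i)) * E * K) * hinvi
    have hZij : (Z i).eval a = (Z j).eval a := by
      have := hmatch i j hij
      rw [hadef, hAdef]
      exact this
    rw [hsum, hZij]
    have hci := hcne i
    have hcj := hcne j
    field_simp
    linear_combination ((Z j).eval a) * hanti
  -- N is a constant multiple of T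
  set c0 : ℂ := N.coeff D with hc0def
  have hAinj : Set.InjOn A ↑P := by
    rintro ⟨i, j⟩ hp ⟨m, n⟩ hq hA0
    rw [hPdef, Finset.coe_offDiag] at hp hq
    have hij : i ≠ j := hp.2.2
    have hmn : m ≠ n := hq.2.2
    have := hnode i j m n hij hmn (by simpa [hAdef] using hA0)
    simp [Prod.ext_iff, this.1, this.2]
  have hTroot : ∀ p ∈ P, T.eval (A p) = 0 := by
    intro p hp
    rw [hTev]
    exact Finset.prod_eq_zero hp (by ring)
  have hNT : N = Polynomial.C c0 * T := by
    have hMcoeff : ∀ m : ℕ, D ≤ m → (N - Polynomial.C c0 * T).coeff m = 0 := by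
      intro m hm
      rcases eq_or_lt_of_le hm with h | h
      · have hT1 : T.coeff D = 1 := by
          rw [← hTdeg]; exact hTmonic.coeff_natDegree
        rw [Polynomial.coeff_sub, Polynomial.coeff_C_mul, ← h, hT1, hc0def]
        ring
      · have hN0 : N.coeff m = 0 := Polynomial.coeff_eq_zero_of_natDegree_lt (lt_of_le_of_lt hNdeg h)
        have hT0 : T.coeff m = 0 := Polynomial.coeff_eq_zero_of_natDegree_lt (by rw [hTdeg]; exact h)
        rw [Polynomial.coeff_sub, Polynomial.coeff_C_mul, hN0, hT0]
        ring
    by_cases hM0 : N - Polynomial.C c0 * T = 0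
    · rw [sub_eq_zero] at hM0; exact hM0
    exfalso
    apply hM0
    apply Polynomial.eq_zero_of_natDegree_lt_card_of_eval_eq_zero' _ (P.image A)
    · rintro b hb
      obtain ⟨⟨i, j⟩, hp, rfl⟩ := Finset.mem_image.mp hb
      have hij : i ≠ j := by
        rw [hPdef, Finset.mem_offDiag] at hp
        exact hp.2.2
      rw [Polynomial.eval_sub, Polynomial.eval_mul, Polynomial.eval_C,
        hNval i j hij, hTroot (i, j) hp]
      ring
    · rw [Finset.card_image_of_injOn hAinj, hPcard]
      rw [Polynomial.natDegree_lt_iff_degree_lt hM0,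
        Polynomial.degree_lt_iff_coeff_zero]
      exact hMcoeff
  -- conclusion
  refine ⟨c0, fun ζ hgood => ?_⟩
  have hTz : T.eval ζ ≠ 0 := by
    rw [hTev]
    apply Finset.prod_ne_zero_iff.mpr
    rintro ⟨i, j⟩ hp hzero
    have hij : i ≠ j := by
      rw [hPdef, Finset.mem_offDiag] at hp
      exact hp.2.2
    have hza : ζ = A (i, j) := by
      have := sub_eq_zero.mp hzero; exact this
    exact hgood i j hij (by rw [hza]; exact hroot i j hij)
  have hterm : ∀ s : Fin k,
      (Z s).eval ζ / (∏ l ∈ Finset.univ.erase s, (eta (x s) (z s) ζ - eta (x l) (z l) ζ)) =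
        (Polynomial.C (c s)⁻¹ * Z s * R s).eval ζ / T.eval ζ := by
    intro s
    have hQz : (∏ l ∈ Finset.univ.erase s, (eta (x s) (z s) ζ - eta (x l) (z l) ζ)) ≠ 0 := by
      apply Finset.prod_ne_zero_iff.mpr
      intro l hl
      exact sub_ne_zero.mpr (hgood s l (Finset.ne_of_mem_erase hl).symm)
    rw [div_eq_div_iff hQz hTz]
    simp only [Polynomial.eval_mul, Polynomial.eval_C]
    have h := hQT s ζ
    have hcs := hcne s
    field_simp
    linear_combination (-(Z s).eval ζ) * h
  calc ∑ s : Fin k, (Z s).eval ζ /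
        ∏ l ∈ Finset.univ.erase s, (eta (x s) (z s) ζ - eta (x l) (z l) ζ)
      = ∑ s : Fin k, (Polynomial.C (c s)⁻¹ * Z s * R s).eval ζ / T.eval ζ :=
        Finset.sum_congr rfl (fun s _ => hterm s)
    _ = N.eval ζ / T.eval ζ := by
        rw [hNdef, Polynomial.eval_finset_sum, Finset.sum_div]
    _ = c0 := by
        rw [hNT, Polynomial.eval_mul, Polynomial.eval_C, mul_div_assoc, div_self hTz, mul_one]

end

end ReducibleSpectral
end

section
/- Let k ≥ 2, let (x_i, z_i) ∈ ℝ × ℂ, i = 1,…,k, have pairwise distinct z_i, and fix l ∈ {1,…,k}. Then for all ζ ∈ ℂ the polynomial identity ∏_{i≠l} (ζ − a_{il})·(1 + conj(a_{il})·ζ) = C_l · ∏_{i≠l} (η_l(ζ) − η_i(ζ)) holds, where C_l = ∏_{i≠l} (x_i − x_l + r_{il}) / |z_i − z_l|². Moreover, C_l is a strictly positive real number. (C_l is the squared norm ⟨s^l, s^l⟩ of the limiting section s^l given on the l-th component by Q_l(ζ) = ∏_{i≠l}(ζ − a_{il}) and vanishing on the other components; in particular Hitchin's hermitian form is positive-definite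 on the connected component of definite line bundles containing L^t(k−2) for large t > 0.) -/
namespace ReducibleSpectral

noncomputable section

/-- The squared norm `C_l = ⟨s^l, s^l⟩ = ∏_{i≠l} (x_i − x_l + r_{il})/|z_i − z_l|²`. -/
def Cnorm (k : ℕ) (x : Fin k → ℝ) (z : Fin k → ℂ) (l : Fin k) : ℝ :=
  ∏ i ∈ Finset.univ.erase l,
    (x i - x l + rr (x i) (x l) (z i) (z l)) / ‖z i - z l‖ ^ 2

lemma rr_sq (x x' : ℝ) (z z' : ℂ) :
    rr x x' z z' ^ 2 = (x - x') ^ 2 + ‖z - z'‖ ^ 2 := by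
  rw [rr, Real.sq_sqrt]
  positivity

lemma aux (d r w v ζ : ℂ) (hw : w ≠ 0) (hv : v ≠ 0) (hr : r ^ 2 = d ^ 2 + w * v) :
    (ζ - (d + r) / v) * (1 + (d + r) / w * ζ) =
      (d + r) / (w * v) * (v * ζ ^ 2 - 2 * d * ζ - w) := by
  field_simp
  linear_combination (-ζ) * hr

lemma key (x x' : ℝ) (z z' : ℂ) (h : z ≠ z') (ζ : ℂ) :
    (ζ - aa x x' z z') * (1 + (starRingEnd ℂ) (aa x x' z z') * ζ) =
      (((x - x' + rr x x' z z') / ‖z - z'‖ ^ 2 : ℝ) : ℂ) *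
        (eta x' z' ζ - eta x z ζ) := by
  have hw : z - z' ≠ 0 := sub_ne_zero.mpr h
  have hv : (starRingEnd ℂ) (z - z') ≠ 0 := (map_ne_zero (starRingEnd ℂ)).mpr hw
  have habs : ((‖z - z'‖ ^ 2 : ℝ) : ℂ) = (z - z') * (starRingEnd ℂ) (z - z') := by
    rw [Complex.sq_norm, Complex.mul_conj]
  have hr : ((rr x x' z z' : ℝ) : ℂ) ^ 2 =
      ((x - x' : ℝ) : ℂ) ^ 2 + (z - z') * (starRingEnd ℂ) (z - z') := by
    rw [← habs, ← Complex.ofReal_pow, ← Complex.ofReal_pow, ← Complex.ofReal_add, rr_sq]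
  have h1 : aa x x' z z' =
      (((x - x' : ℝ) : ℂ) + ((rr x x' z z' : ℝ) : ℂ)) / (starRingEnd ℂ) (z - z') := by
    rw [aa, map_sub]
  have h2 : (starRingEnd ℂ) (aa x x' z z') =
      (((x - x' : ℝ) : ℂ) + ((rr x x' z z' : ℝ) : ℂ)) / (z - z') := by
    rw [h1, map_div₀, map_add, Complex.conj_ofReal, Complex.conj_ofReal, Complex.conj_conj]
  have h3 : eta x' z' ζ - eta x z ζ =
      (starRingEnd ℂ) (z - z') * ζ ^ 2 - 2 * ((x - x' : ℝ) : ℂ) * ζ - (z - z') := by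
    rw [eta, eta, map_sub]
    push_cast
    ring
  have h4 : (((x - x' + rr x x' z z') / ‖z - z'‖ ^ 2 : ℝ) : ℂ) =
      (((x - x' : ℝ) : ℂ) + ((rr x x' z z' : ℝ) : ℂ)) / ((z - z') * (starRingEnd ℂ) (z - z')) := by
    rw [← habs, Complex.ofReal_div, Complex.ofReal_add]
  rw [h2, h1, h3, h4]
  exact aux _ _ _ _ ζ hw hv hr

lemma factor_pos (x x' : ℝ) (z z' : ℂ) (h : z ≠ z') :
    0 < (x - x' + rr x x' z z') / ‖z - z'‖ ^ 2 := by
  have hw : z - z' ≠ 0 := sub_ne_zero.mpr h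
  have habs : 0 < ‖z - z'‖ := norm_pos_iff.mpr hw
  have hrpos : |x - x'| < rr x x' z z' := by
    have h0 : 0 ≤ rr x x' z z' := Real.sqrt_nonneg _
    have hsq : |x - x'| ^ 2 < rr x x' z z' ^ 2 := by
      rw [rr_sq, sq_abs]
      nlinarith
    nlinarith [abs_nonneg (x - x')]
  have hnum : 0 < x - x' + rr x x' z z' := by
    have := neg_abs_le (x - x')
    linarith
  positivity

/-- the polynomial identity
`∏_{i≠l} (ζ − a_{il})(1 + conj(a_{il})ζ) = C_l · ∏_{i≠l} (η_l(ζ) − η_i(ζ))` with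
`C_l = ∏_{i≠l}(x_i − x_l + r_{il})/|z_i − z_l|² > 0`; so the limiting section `s^l` has
positive squared norm, and Hitchin's form is positive-definite on the component of definite
line bundles containing `L^t(k−2)` for large `t > 0`. -/
theorem limiting_section_norm_positive (k : ℕ) (hk : 2 ≤ k)
    (x : Fin k → ℝ) (z : Fin k → ℂ) (hz : Function.Injective z) (l : Fin k) :
    (∀ ζ : ℂ,
      ∏ i ∈ Finset.univ.erase l,
          ((ζ - aa (x i) (x l) (z i) (z l)) *
            (1 + (starRingEnd ℂ) (aa (x i) (x l) (z i) (z l)) * ζ)) =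
        ((Cnorm k x z l : ℝ) : ℂ) *
          ∏ i ∈ Finset.univ.erase l, (eta (x l) (z l) ζ - eta (x i) (z i) ζ)) ∧
      0 < Cnorm k x z l := by
  have hne : ∀ i ∈ Finset.univ.erase l, z i ≠ z l := fun i hi =>
    fun hzz => (Finset.mem_erase.mp hi).1 (hz hzz)
  constructor
  · intro ζ
    rw [Cnorm, Complex.ofReal_prod, ← Finset.prod_mul_distrib]
    exact Finset.prod_congr rfl fun i hi => key (x i) (x l) (z i) (z l) (hne i hi) ζ
  · rw [Cnorm]
    exact Finset.prod_pos fun i hi => factor_pos (x i) (x l) (z i) (z l) (hne i hi)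

end

end ReducibleSpectral
end

section
/- Let k ≥ 2, assume the node condition on the spectral data, and assume a_{ij} ≠ 0 for all i ≠ j. Let P_1,…,P_k and R_1,…,R_k be polynomials of degree at most k−1, write R_n(ζ) = Σ_{m=0}^{k−1} b_{n,m} ζ^m, and define σR_n(ζ) = Σ_{m=0}^{k−1} (−1)^{k−1−m}·conj(b_{n,m})·ζ^{k−1−m} and Z_n = P_n·σR_n (a polynomial of degree at most 2k−2). Assume the matching condition Z_n(a_{nm}) = Z_m(a_{nm}) for all n ≠ m, and let c ∈ ℂ be the constant value of Σ_{n=1}^{k} Z_n(ζ)/∏_{m≠n}(η_n(ζ) − η_m(ζ)) (which exists by the matching condition). Then c = Σ_{n=1}^{k} P_n(0)·conj(b_{n,k−1}) / ∏_{m≠n} (z_n − z_m), where b_{n,k−1} is the coefficient of ζ^{k−1} in R_n. -/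
namespace ReducibleSpectral

noncomputable section

/-- For `R(ζ) = Σ_{m=0}^{k−1} b_m ζ^m`, the polynomial
`σR(ζ) = Σ_{m=0}^{k−1} (−1)^{k−1−m}·conj(b_m)·ζ^{k−1−m}`, representing the antiholomorphic
conjugate section: `(−1)^{k−1} ζ^{k−1} conj(R(−1/conj(ζ))) = σR(ζ)`. -/
def sigmaR (k : ℕ) (R : Polynomial ℂ) : Polynomial ℂ :=
  ∑ m ∈ Finset.range k,
    Polynomial.C ((-1 : ℂ) ^ (k - 1 - m) * (starRingEnd ℂ) (R.coeff m)) *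
      Polynomial.X ^ (k - 1 - m)

lemma sigmaR_eval_zero (k : ℕ) (hk : 1 ≤ k) (R : Polynomial ℂ) :
    (sigmaR k R).eval 0 = (starRingEnd ℂ) (R.coeff (k - 1)) := by
  unfold sigmaR
  rw [Polynomial.eval_finset_sum, Finset.sum_eq_single (k - 1)]
  · simp [Nat.sub_self]
  · intro m hm hne
    have hm' : m < k := Finset.mem_range.mp hm
    have : k - 1 - m ≠ 0 := by omega
    simp [zero_pow this]
  · intro h
    exact absurd (Finset.mem_range.mpr (by omega)) h

/-- the value of Hitchin's hermitian pairing. With `Z_n = P_n·σR_n` subject to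
the matching conditions, the constant value `c` of `Σ_n Z_n(ζ)/∏_{m≠n}(η_n(ζ)−η_m(ζ))` is
`c = Σ_n P_n(0)·conj(b_{n,k−1})/∏_{m≠n}(z_n − z_m)`. -/
theorem hermitian_pairing_value (k : ℕ) (hk : 2 ≤ k)
    (x : Fin k → ℝ) (z : Fin k → ℂ) (hz : Function.Injective z)
    (hnode : Nodes k x z)
    (ha : ∀ i j : Fin k, i ≠ j → aa (x i) (x j) (z i) (z j) ≠ 0)
    (P R : Fin k → Polynomial ℂ)
    (hdegP : ∀ n, (P n).degree ≤ (k - 1 : ℕ))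
    (hdegR : ∀ n, (R n).degree ≤ (k - 1 : ℕ))
    (hmatch : ∀ n m : Fin k, n ≠ m →
      (P n * sigmaR k (R n)).eval (aa (x n) (x m) (z n) (z m)) =
        (P m * sigmaR k (R m)).eval (aa (x n) (x m) (z n) (z m)))
    (c : ℂ)
    (hc : ∀ ζ : ℂ, (∀ s l : Fin k, s ≠ l → eta (x s) (z s) ζ ≠ eta (x l) (z l) ζ) →
      ∑ n : Fin k, (P n * sigmaR k (R n)).eval ζ /
        ∏ m ∈ Finset.univ.erase n, (eta (x n) (z n) ζ - eta (x m) (z m) ζ) = c) :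
    c = ∑ n : Fin k, (P n).eval 0 * (starRingEnd ℂ) ((R n).coeff (k - 1)) /
      ∏ m ∈ Finset.univ.erase n, (z n - z m) := by
  have h0 := hc 0 (fun s l hsl => by
    simpa [eta] using fun h => hsl (hz h))
  rw [← h0]
  refine Finset.sum_congr rfl fun n _ => ?_
  rw [Polynomial.eval_mul, sigmaR_eval_zero k (by omega) (R n)]
  congr 1
  refine Finset.prod_congr rfl fun m _ => ?_
  simp [eta]

end

end ReducibleSpectral
end
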